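/- arXiv:2301.13789 — 6 statements merged into one kernel-verified Lean document; each statement's English description precedes it below -/
import Mathlib

section
/- Let H be a graph on h vertices with chromatic number χ(H) = r ≥ 3, and suppose H has no critical edge, i.e., χ(H − e) = χ(H) for every edge e of H. There exist constants C, c, ε₀ > 0 (depending only on H) such that for every 0 < ε < ε₀ there are infinitely many positive integers n for which there exists an n-vertex graph G with minimum degree δ(G) ≥ ((r−2)/(r−1))·n such that: (i) G contains at most C·ε²·n^h labeled copies of H, and (ii) for every set D of at most c·ε·n² edges of G, the graph G − D still contains a copy of H. (This yields δ_lin-rem(H) ≥ (r−2)/(r−1) for H without a critical edge.) -/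
/-
Take `r - 1` parts `Fin (r - 1) × ZMod k` with `k` prime, join any two parts completely, and
inside part `0` add the Cayley graph of the differences `(x i - x j) * d`, `d ∈ {1, …, m}`,
`m ≈ εk`, where `x` labels the vertices of `H` injectively in `ZMod k`. Projecting to the parts
colours `G` apart from the Cayley edges, so a copy of `H` using at most one of them would make
`H` or some `H - e` `(r - 1)`-colourable. Hence every copy uses two Cayley edges, and since
the Cayley graph has degree `O(m)` there are `O(m² n^(h-2)) = O(ε² n^h)` copies.
Conversely, merging two colour classes of an `r`-colouring of `H` into part `0`, the affine
maps `i ↦ (part of i, a + x i * d)` are `k m` copies of `H`. An edge of such a copy, with its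
label `(i, j)`, determines `(a, d)`, because no two elements of `{1, …, m}` sum to `0` in
`ZMod k`; so deleting fewer than `k m / h²` edges leaves one of these copies intact.
-/
open SimpleGraph

/-- The number of labeled copies of `H` in `G`: injective graph homomorphisms `H → G`. -/
noncomputable def copyCount {V W : Type} [Fintype V] [Fintype W]
    (H : SimpleGraph V) (G : SimpleGraph W) : ℕ :=
  Nat.card {f : H →g G // Function.Injective f}

/-- The edge set of the copy of `H` given by the map `f`. -/
def copyEdges {V W : Type} (H : SimpleGraph V) (f : V → W) : Set (Sym2 W) :=
  Sym2.map f '' H.edgeSet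

/-- `G` contains `m` pairwise edge-disjoint labeled copies of `H`. -/
def HasEdgeDisjointCopies {V W : Type} (H : SimpleGraph V) (G : SimpleGraph W) (m : ℕ) : Prop :=
  ∃ f : Fin m → (H →g G),
    (∀ i, Function.Injective (f i)) ∧
    Pairwise fun i j => Disjoint (copyEdges H (f i)) (copyEdges H (f j))

/-- `G` contains a (labeled) copy of `H`. -/
def HasCopy {V W : Type} (H : SimpleGraph V) (G : SimpleGraph W) : Prop :=
  ∃ f : H →g G, Function.Injective f

open Finset Function

section Transfer

variable {V W W' : Type} (H : SimpleGraph V) (G : SimpleGraph W) (e : W' ≃ W)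

lemma natCard_neighborSet_comap (v : W') :
    Nat.card ((G.comap e).neighborSet v) = Nat.card (G.neighborSet (e v)) :=
  Nat.card_congr (e.subtypeEquiv fun _ => Iff.rfl)

lemma copyCount_comap_le [Fintype V] [Fintype W] [Fintype W'] :
    _root_.copyCount H (G.comap e) ≤ _root_.copyCount H G :=
  Nat.card_le_card_of_injective
    (fun f => ⟨(Iso.comap e G).toHom.comp f.1, e.injective.comp f.2⟩)
    fun _ _ hfg => Subtype.ext <| RelHom.ext fun i =>
      e.injective (congrArg (fun F : H →g G => F i) (congrArg Subtype.val hfg))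

lemma HasCopy.comap_deleteEdges (s : Set (Sym2 W'))
    (hs : HasCopy H (G.deleteEdges (Sym2.map e '' s))) :
    HasCopy H ((G.comap e).deleteEdges s) := by
  obtain ⟨f, hf⟩ := hs
  refine ⟨⟨e.symm ∘ f, fun {i j} hij => ?_⟩, e.symm.injective.comp hf⟩
  obtain ⟨hadj, hnot⟩ := (deleteEdges_adj ..).1 (f.map_adj hij)
  refine (deleteEdges_adj ..).2 ⟨by simpa using hadj, fun hmem => hnot ⟨_, hmem, ?_⟩⟩
  simp

end Transfer

lemma hasCopy_deleteEdges_of_separated {V W ι : Type} [Fintype V] [Fintype ι]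
    {H : SimpleGraph V} {G : SimpleGraph W} (φ : ι → (H →g G)) (hφ : ∀ c, Injective (φ c))
    (hsep : ∀ i j, H.Adj i j → Injective fun c => s(φ c i, φ c j))
    (D : Finset (Sym2 W)) (hD : #D * Fintype.card V ^ 2 < Fintype.card ι) :
    HasCopy H (G.deleteEdges D) := by
  classical
  set hit : V × V → Finset ι := fun ij =>
    {c | H.Adj ij.1 ij.2 ∧ s(φ c ij.1, φ c ij.2) ∈ D}
  have hhit : ∀ ij, #(hit ij) ≤ #D := fun ij =>
    card_le_card_of_injOn _ (fun c hc => (mem_filter.1 hc).2.2)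
      fun c hc c' _ h => hsep _ _ (mem_filter.1 hc).2.1 h
  have hcard : #(univ.biUnion hit) < #(univ : Finset ι) := calc
    #(univ.biUnion hit) ≤ ∑ ij, #(hit ij) := card_biUnion_le
    _ ≤ Fintype.card (V × V) * #D := by simpa using sum_le_card_nsmul univ _ _ fun ij _ => hhit ij
    _ < #(univ : Finset ι) := by simpa [Fintype.card_prod, ← sq, mul_comm] using hD
  obtain ⟨c, -, hc⟩ := exists_mem_notMem_of_card_lt_card hcard
  refine ⟨⟨φ c, fun {i j} hij => (deleteEdges_adj ..).2 ⟨(φ c).map_adj hij, fun hmem => hc ?_⟩⟩,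
    hφ c⟩
  exact mem_biUnion.2 ⟨(i, j), mem_univ _, mem_filter.2 ⟨mem_univ _, hij, hmem⟩⟩

section Counting

variable {V W : Type} [Fintype V] [DecidableEq V] [Fintype W] [DecidableEq W]
  {S : SimpleGraph W} [DecidableRel S.Adj] {Δ : ℕ}

lemma card_le_mul_card_image_update (hΔ : ∀ w, S.degree w ≤ Δ) {a b : V} (hab : a ≠ b)
    (w₀ : W) (s : Finset (V → W)) (hs : ∀ f ∈ s, S.Adj (f a) (f b)) :
    #s ≤ Δ * #(s.image (update · b w₀)) := by
  refine card_le_mul_card_image s Δ fun g _ =>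
    (card_le_card_of_injOn (· b) ?_ ?_).trans (hΔ (g a))
  · intro f hf
    obtain ⟨hfs, rfl⟩ := mem_filter.1 hf
    simpa [update_of_ne hab] using hs f hfs
  · intro f hf f' hf' h
    obtain ⟨-, hfg⟩ := mem_filter.1 hf
    obtain ⟨-, hfg'⟩ := mem_filter.1 hf'
    calc f = update (update f b w₀) b (f b) := by simp
      _ = update (update f' b w₀) b (f' b) := by rw [hfg, hfg']; exact congrArg (update g b) h
      _ = f' := by simp

lemma card_filter_eq_and_eq_le {b d : V} (hbd : b ≠ d) (w₀ : W) :
    #{f : V → W | f b = w₀ ∧ f d = w₀} ≤ Fintype.card W ^ (Fintype.card V - 2) := by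
  have hinj := card_le_card_of_injOn (t := (univ : Finset (↥(({b, d} : Finset V)ᶜ) → W)))
    (s := {f : V → W | f b = w₀ ∧ f d = w₀}) (fun f x => f x) (fun _ _ => mem_univ _) ?_
  · rwa [card_univ, Fintype.card_fun, Fintype.card_coe, card_compl, card_pair hbd] at hinj
  intro f hf f' hf' h
  obtain ⟨hfb, hfd⟩ := (mem_filter.1 hf).2
  obtain ⟨hfb', hfd'⟩ := (mem_filter.1 hf').2
  funext x
  by_cases hx : x ∈ ({b, d} : Finset V)
  · simp only [mem_insert, mem_singleton] at hx
    rcases hx with rfl | rfl <;> simp_all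
  · exact congrFun h ⟨x, mem_compl.2 hx⟩

lemma card_filter_adj_and_adj_le [Nonempty W] (hΔ : ∀ w, S.degree w ≤ Δ) {a b c d : V}
    (hab : a ≠ b) (hcd : c ≠ d) (hbc : b ≠ c) (hbd : b ≠ d) :
    #{f : V → W | S.Adj (f a) (f b) ∧ S.Adj (f c) (f d)} ≤
      Δ ^ 2 * Fintype.card W ^ (Fintype.card V - 2) := by
  inhabit W
  set s : Finset (V → W) := {f | S.Adj (f a) (f b) ∧ S.Adj (f c) (f d)}
  set s₁ := s.image (update · b default)
  have h₁ : #s ≤ Δ * #s₁ :=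
    card_le_mul_card_image_update hΔ hab default s fun f hf => (mem_filter.1 hf).2.1
  have h₂ : #s₁ ≤ Δ * #(s₁.image (update · d default)) := by
    refine card_le_mul_card_image_update hΔ hcd default s₁ fun f hf => ?_
    obtain ⟨g, hg, rfl⟩ := mem_image.1 hf
    simpa [update_of_ne hbc.symm, update_of_ne hbd.symm] using (mem_filter.1 hg).2.2
  have h₃ : s₁.image (update · d default) ⊆
      ({f : V → W | f b = default ∧ f d = default} : Finset (V → W)) := by
    intro f hf
    obtain ⟨g, hg, rfl⟩ := mem_image.1 hf
    obtain ⟨g, -, rfl⟩ := mem_image.1 hg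
    simp [update_of_ne hbd]
  calc #s ≤ Δ * (Δ * #(s₁.image (update · d default))) := h₁.trans (Nat.mul_le_mul_left _ h₂)
    _ ≤ Δ * (Δ * Fintype.card W ^ (Fintype.card V - 2)) := by
      gcongr; exact (card_le_card h₃).trans (card_filter_eq_and_eq_le hbd default)
    _ = _ := by ring

end Counting

section TwoEdges

variable {V W : Type}

def MapsTwoEdgesInto (H : SimpleGraph V) (S : SimpleGraph W) (f : V → W) : Prop :=
  ∃ a b c d, H.Adj a b ∧ H.Adj c d ∧ s(a, b) ≠ s(c, d) ∧ S.Adj (f a) (f b) ∧ S.Adj (f c) (f d)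

lemma MapsTwoEdgesInto.exists_ne {H : SimpleGraph V} {S : SimpleGraph W} {f : V → W}
    (hf : MapsTwoEdgesInto H S f) :
    ∃ a b c d, a ≠ b ∧ c ≠ d ∧ b ≠ c ∧ b ≠ d ∧ S.Adj (f a) (f b) ∧ S.Adj (f c) (f d) := by
  obtain ⟨a, b, c, d, hab, hcd, hne, hSab, hScd⟩ := hf
  by_cases hb : b ≠ c ∧ b ≠ d
  · exact ⟨a, b, c, d, hab.ne, hcd.ne, hb.1, hb.2, hSab, hScd⟩
  refine ⟨b, a, c, d, hab.ne.symm, hcd.ne, ?_, ?_, hSab.symm, hScd⟩ <;> rintro rfl <;>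
    rcases not_and_or.1 hb with h | h <;> simp_all [not_not, Sym2.eq_swap]

lemma copyCount_le_of_mapsTwoEdgesInto [Fintype V] [Fintype W] [Nonempty W]
    {H : SimpleGraph V} {G S : SimpleGraph W} [DecidableRel S.Adj] {Δ : ℕ}
    (hΔ : ∀ w, S.degree w ≤ Δ) (hG : ∀ f : H →g G, Injective f → MapsTwoEdgesInto H S f) :
    _root_.copyCount H G ≤
      Fintype.card V ^ 4 * (Δ ^ 2 * Fintype.card W ^ (Fintype.card V - 2)) := by
  classical
  set A : V × V × V × V → Finset (V → W) := fun t =>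
    {f | t.1 ≠ t.2.1 ∧ t.2.2.1 ≠ t.2.2.2 ∧ t.2.1 ≠ t.2.2.1 ∧ t.2.1 ≠ t.2.2.2 ∧
      S.Adj (f t.1) (f t.2.1) ∧ S.Adj (f t.2.2.1) (f t.2.2.2)}
  have hA : ∀ t, #(A t) ≤ Δ ^ 2 * Fintype.card W ^ (Fintype.card V - 2) := by
    rintro ⟨a, b, c, d⟩
    by_cases h : a ≠ b ∧ c ≠ d ∧ b ≠ c ∧ b ≠ d
    · refine (card_le_card fun f hf => ?_).trans
        (card_filter_adj_and_adj_le hΔ h.1 h.2.1 h.2.2.1 h.2.2.2)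
      simp only [A, mem_filter] at hf ⊢
      exact ⟨hf.1, hf.2.2.2.2.2⟩
    · simp only [A]
      rw [filter_false_of_mem fun f _ hf => h ⟨hf.1, hf.2.1, hf.2.2.1, hf.2.2.2.1⟩]
      exact Nat.zero_le _
  calc _root_.copyCount H G ≤ #(univ.biUnion A) := by
        rw [_root_.copyCount, ← Nat.card_eq_finsetCard]
        refine Nat.card_le_card_of_injective (fun f => ⟨f.1, ?_⟩) fun f g hfg => ?_
        · obtain ⟨a, b, c, d, h⟩ := (hG f.1 f.2).exists_ne
          exact mem_biUnion.2 ⟨(a, b, c, d), mem_univ _, mem_filter.2 ⟨mem_univ _, h⟩⟩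
        · exact Subtype.ext (DFunLike.coe_injective (congrArg Subtype.val hfg))
    _ ≤ ∑ t, #(A t) := card_biUnion_le
    _ ≤ Fintype.card V ^ 4 * (Δ ^ 2 * Fintype.card W ^ (Fintype.card V - 2)) := by
        simpa [Fintype.card_prod, pow_succ, mul_assoc] using
          sum_le_card_nsmul univ _ _ fun t _ => hA t

lemma colorable_deleteEdges_of_hom {P : Type} [Fintype P] {H : SimpleGraph V}
    {G S : SimpleGraph W} (π : W → P) (hG : ∀ u v, G.Adj u v → π u ≠ π v ∨ S.Adj u v)
    (f : H →g G) (s : Set (Sym2 V)) (hs : ∀ x y, H.Adj x y → S.Adj (f x) (f y) → s(x, y) ∈ s) :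
    (H.deleteEdges s).Colorable (Fintype.card P) :=
  (Coloring.mk (π ∘ f) fun {x y} hxy => by
    obtain ⟨hxy, hns⟩ := (deleteEdges_adj ..).1 hxy
    exact (hG _ _ (f.map_adj hxy)).resolve_right fun hS => hns (hs x y hxy hS)).colorable

lemma mapsTwoEdgesInto_of_hom {P : Type} [Fintype P] {H : SimpleGraph V}
    {G S : SimpleGraph W} (π : W → P) (hG : ∀ u v, G.Adj u v → π u ≠ π v ∨ S.Adj u v)
    (hH : ¬ H.Colorable (Fintype.card P))
    (hHe : ∀ e ∈ H.edgeSet, ¬ (H.deleteEdges {e}).Colorable (Fintype.card P))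
    (f : H →g G) : MapsTwoEdgesInto H S f := by
  by_contra hno
  by_cases hS : ∃ a b, H.Adj a b ∧ S.Adj (f a) (f b)
  · obtain ⟨a, b, hab, hSab⟩ := hS
    refine hHe s(a, b) hab (colorable_deleteEdges_of_hom π hG f _ fun x y hxy hSxy => ?_)
    by_contra hne
    exact hno ⟨x, y, a, b, hxy, hab, hne, hSxy, hSab⟩
  · apply hH
    simpa using colorable_deleteEdges_of_hom π hG f ∅ fun x y hxy hSxy => hS ⟨x, y, hxy, hSxy⟩

end TwoEdges

section Construction

variable {P F : Type}

section Graph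

variable [AddCommGroup F] (p₀ : P) (T : Finset F)

def partCayley : SimpleGraph (P × F) :=
  SimpleGraph.fromRel fun u v => u.1 = p₀ ∧ v.1 = p₀ ∧ u.2 - v.2 ∈ T

instance [DecidableEq P] [DecidableEq F] : DecidableRel (partCayley p₀ T).Adj :=
  fun _ _ => decidable_of_iff _ (fromRel_adj _ _ _).symm

def multipartiteCayley : SimpleGraph (P × F) :=
  (⊤ : SimpleGraph P).comap Prod.fst ⊔ partCayley p₀ T

lemma multipartiteCayley_adj {u v : P × F} (h : (multipartiteCayley p₀ T).Adj u v) :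
    u.1 ≠ v.1 ∨ (partCayley p₀ T).Adj u v := h

lemma degree_partCayley_le [Fintype P] [Fintype F] [DecidableEq P] [DecidableEq F] (u : P × F) :
    (partCayley p₀ T).degree u ≤ 2 * #T := by
  have hsub : (partCayley p₀ T).neighborFinset u ⊆
      T.image (fun t => (p₀, u.2 - t)) ∪ T.image (fun t => (p₀, u.2 + t)) := by
    intro v hv
    rw [mem_neighborFinset, partCayley, fromRel_adj] at hv
    rcases hv.2 with ⟨-, hv₀, hT⟩ | ⟨hv₀, -, hT⟩
    · exact mem_union_left _ (mem_image.2 ⟨_, hT, Prod.ext hv₀.symm (by simp)⟩)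
    · exact mem_union_right _ (mem_image.2 ⟨_, hT, Prod.ext hv₀.symm (by simp)⟩)
  calc (partCayley p₀ T).degree u ≤ #T + #T :=
        (card_le_card hsub).trans
          ((card_union_le _ _).trans (add_le_add card_image_le card_image_le))
    _ = 2 * #T := (two_mul _).symm

lemma le_natCard_neighborSet_multipartiteCayley [Fintype P] [Fintype F] [DecidableEq P]
    (u : P × F) :
    (Fintype.card P - 1) * Fintype.card F ≤
      Nat.card ((multipartiteCayley p₀ T).neighborSet u) := by
  calc (Fintype.card P - 1) * Fintype.card F = #(({u.1}ᶜ : Finset P) ×ˢ (univ : Finset F)) := by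
        rw [card_product, card_compl, card_singleton, card_univ]
    _ = Nat.card (({u.1}ᶜ ×ˢ univ : Finset (P × F)) : Set (P × F)) :=
        (Nat.card_eq_finsetCard _).symm
    _ ≤ _ := Nat.card_mono (Set.toFinite _) fun v hv => by
        simp only [coe_product, coe_compl, coe_singleton, coe_univ, Set.mem_prod,
          Set.mem_compl_iff, Set.mem_singleton_iff] at hv
        exact Or.inl (Ne.symm hv.1)

end Graph

section Copies

variable [Field F] {V : Type} (x : V → F) (D₀ : Finset F)

def differenceSet [Fintype V] [DecidableEq F] : Finset F :=
  image₂ (fun (ij : V × V) d => (x ij.1 - x ij.2) * d) univ D₀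

lemma card_differenceSet_le [Fintype V] [DecidableEq F] :
    #(differenceSet x D₀) ≤ Fintype.card V ^ 2 * #D₀ := by
  rw [differenceSet]
  simpa [Fintype.card_prod, sq] using
    card_image₂_le (fun (ij : V × V) d => (x ij.1 - x ij.2) * d) univ D₀

def copyMap (pc : V → P) (a d : F) : V → P × F := fun i => (pc i, a + x i * d)

variable {x}

lemma copyMap_injective (hx : Injective x) (pc : V → P) (a : F) {d : F} (hd : d ≠ 0) :
    Injective (copyMap x pc a d) := fun _ _ h =>
  hx (mul_right_cancel₀ hd (add_left_cancel (congrArg Prod.snd h)))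

lemma copyMap_adj [Fintype V] [DecidableEq F] {H : SimpleGraph V} (hx : Injective x) {p₀ : P}
    {pc : V → P}
    (hpc : ∀ i j, H.Adj i j → pc i ≠ pc j ∨ (pc i = p₀ ∧ pc j = p₀)) (a : F) {d : F}
    (hd : d ∈ D₀) (hd₀ : d ≠ 0) {i j : V} (hij : H.Adj i j) :
    (multipartiteCayley p₀ (differenceSet x D₀)).Adj (copyMap x pc a d i) (copyMap x pc a d j) := by
  rcases hpc i j hij with hne | ⟨hi, hj⟩
  · exact Or.inl hne
  refine Or.inr ((fromRel_adj _ _ _).2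
    ⟨(copyMap_injective hx pc a hd₀).ne hij.ne, Or.inl ⟨hi, hj, ?_⟩⟩)
  exact mem_image₂.2 ⟨(i, j), mem_univ _, d, hd, by simp only [copyMap]; ring⟩

lemma copyMap_eq_of_sym2_eq (hx : Injective x) (pc : V → P) {a a' d d' : F}
    (hdd' : d + d' ≠ 0) {i j : V} (hij : i ≠ j)
    (h : s(copyMap x pc a d i, copyMap x pc a d j) =
      s(copyMap x pc a' d' i, copyMap x pc a' d' j)) :
    a = a' ∧ d = d' := by
  have hx' : x i - x j ≠ 0 := sub_ne_zero.2 (hx.ne hij)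
  rcases Sym2.eq_iff.1 h with ⟨hi, hj⟩ | ⟨hi, hj⟩
  · have hi := congrArg Prod.snd hi
    have hj := congrArg Prod.snd hj
    simp only [copyMap] at hi hj
    have hd : d = d' := by
      have : (x i - x j) * (d - d') = 0 := by linear_combination hi - hj
      exact sub_eq_zero.1 ((mul_eq_zero.1 this).resolve_left hx')
    subst hd
    exact ⟨by linear_combination hi, rfl⟩
  · have hi := congrArg Prod.snd hi
    have hj := congrArg Prod.snd hj
    simp only [copyMap] at hi hj
    have : (x i - x j) * (d + d') = 0 := by linear_combination hi - hj
    exact ((mul_eq_zero.1 this).resolve_left hx' |> hdd').elim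

end Copies

variable [Field F] [Fintype F] [DecidableEq F] {V : Type} [Fintype V] {H : SimpleGraph V}
  {p₀ : P} {x : V → F} {D₀ : Finset F}

theorem copyCount_multipartiteCayley_le [Fintype P] [DecidableEq P]
    (hH : ¬ H.Colorable (Fintype.card P))
    (hHe : ∀ e ∈ H.edgeSet, ¬ (H.deleteEdges {e}).Colorable (Fintype.card P)) :
    _root_.copyCount H (multipartiteCayley p₀ (differenceSet x D₀)) ≤
      Fintype.card V ^ 4 * ((2 * (Fintype.card V ^ 2 * #D₀)) ^ 2 *
        (Fintype.card P * Fintype.card F) ^ (Fintype.card V - 2)) := by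
  have : Nonempty (P × F) := ⟨(p₀, 0)⟩
  simpa [Fintype.card_prod] using copyCount_le_of_mapsTwoEdgesInto
    (fun u => (degree_partCayley_le p₀ _ u).trans
      (Nat.mul_le_mul_left 2 (card_differenceSet_le x D₀)))
    fun f _ => mapsTwoEdgesInto_of_hom Prod.fst (fun _ _ => multipartiteCayley_adj _ _) hH hHe f

theorem hasCopy_deleteEdges_multipartiteCayley (hx : Injective x) {pc : V → P}
    (hpc : ∀ i j, H.Adj i j → pc i ≠ pc j ∨ (pc i = p₀ ∧ pc j = p₀))
    (hD₀ : ∀ d ∈ D₀, ∀ d' ∈ D₀, d + d' ≠ 0) (D : Finset (Sym2 (P × F)))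
    (hD : #D * Fintype.card V ^ 2 < Fintype.card F * #D₀) :
    HasCopy H ((multipartiteCayley p₀ (differenceSet x D₀)).deleteEdges D) := by
  have hd₀ : ∀ d ∈ D₀, d ≠ 0 := fun d hd h0 => hD₀ d hd d hd (by simp [h0])
  refine hasCopy_deleteEdges_of_separated (ι := F × D₀)
    (fun c => ⟨copyMap x pc c.1 c.2, copyMap_adj D₀ hx hpc c.1 c.2.2 (hd₀ _ c.2.2)⟩)
    (fun c => copyMap_injective hx pc c.1 (hd₀ _ c.2.2)) (fun i j hij c c' h => ?_) D
    (by simpa using hD)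
  obtain ⟨ha, hd⟩ := copyMap_eq_of_sym2_eq hx pc (hD₀ _ c.2.2 _ c'.2.2) hij.ne h
  exact Prod.ext ha (Subtype.ext hd)

end Construction

lemma exists_finset_zmod_add_ne_zero {k m : ℕ} [NeZero k] (hmk : 2 * m < k) :
    ∃ D₀ : Finset (ZMod k), #D₀ = m ∧ ∀ d ∈ D₀, ∀ d' ∈ D₀, d + d' ≠ 0 := by
  refine ⟨(Icc 1 m).image (Nat.cast : ℕ → ZMod k), ?_, ?_⟩
  · rw [card_image_of_injOn, Nat.card_Icc, Nat.add_sub_cancel]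
    intro i hi j hj hij
    simp only [coe_Icc, Set.mem_Icc] at hi hj
    rwa [ZMod.natCast_eq_natCast_iff', Nat.mod_eq_of_lt (by omega), Nat.mod_eq_of_lt (by omega)]
      at hij
  · simp only [mem_image, mem_Icc]
    rintro _ ⟨i, hi, rfl⟩ _ ⟨j, hj, rfl⟩ h
    rw [← Nat.cast_add, ZMod.natCast_eq_zero_iff] at h
    exact absurd (Nat.le_of_dvd (by omega) h) (by omega)

lemma exists_merge_two_colors_of_colorable {V : Type} {H : SimpleGraph V} {q : ℕ}
    (hH : H.Colorable (q + 2)) :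
    ∃ pc : V → Fin (q + 1), ∀ i j, H.Adj i j → pc i ≠ pc j ∨ (pc i = 0 ∧ pc j = 0) := by
  obtain ⟨C⟩ := hH
  -- truncated subtraction sends both colours `0` and `1` to part `0`
  refine ⟨fun i => ⟨(C i : ℕ) - 1, by omega⟩, fun i j hij => ?_⟩
  have := Fin.val_ne_of_ne (C.valid hij)
  by_cases h : (C i : ℕ) - 1 = (C j : ℕ) - 1
  · exact Or.inr ⟨Fin.ext (by simp; omega), Fin.ext (by simp; omega)⟩
  · exact Or.inl fun h' => h (Fin.val_eq_of_eq h')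

lemma not_colorable_of_chromaticNumber_eq {V : Type} {H : SimpleGraph V} {n : ℕ}
    (h : H.chromaticNumber = (n + 1 : ℕ)) : ¬ H.Colorable n := fun hc => by
  have := hc.chromaticNumber_le
  rw [h, Nat.cast_le] at this
  omega

lemma le_card_of_chromaticNumber_eq {V : Type} [Fintype V] {H : SimpleGraph V} {n : ℕ}
    (h : H.chromaticNumber = n) : n ≤ Fintype.card V := by
  have := H.chromaticNumber_le_card
  rwa [h, Nat.cast_le] at this

theorem exists_robust_graph_of_two_mul_lt {V : Type} [Fintype V] {H : SimpleGraph V} {q k m : ℕ}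
    (hχ : H.chromaticNumber = (q + 2 : ℕ))
    (hnocrit : ∀ e ∈ H.edgeSet, (H.deleteEdges {e}).chromaticNumber = H.chromaticNumber)
    (hk : k.Prime) (hVk : Fintype.card V ≤ k) (hmk : 2 * m < k) :
    ∃ G : SimpleGraph (Fin ((q + 1) * k)),
      (∀ v, q * k ≤ Nat.card (G.neighborSet v)) ∧
      _root_.copyCount H G ≤ Fintype.card V ^ 4 * ((2 * (Fintype.card V ^ 2 * m)) ^ 2 *
        ((q + 1) * k) ^ (Fintype.card V - 2)) ∧
      ∀ D : Finset (Sym2 (Fin ((q + 1) * k))), #D * Fintype.card V ^ 2 < k * m →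
        HasCopy H (G.deleteEdges D) := by
  have := Fact.mk hk
  obtain ⟨x⟩ : Nonempty (V ↪ ZMod k) := Embedding.nonempty_of_card_le (by simpa using hVk)
  obtain ⟨D₀, hD₀, hD₀sum⟩ := exists_finset_zmod_add_ne_zero hmk
  obtain ⟨pc, hpc⟩ :=
    exists_merge_two_colors_of_colorable (H.chromaticNumber_le_iff_colorable.1 hχ.le)
  have hH : ¬ H.Colorable (Fintype.card (Fin (q + 1))) := by
    simpa using not_colorable_of_chromaticNumber_eq hχ
  have hHe : ∀ e ∈ H.edgeSet, ¬ (H.deleteEdges {e}).Colorable (Fintype.card (Fin (q + 1))) :=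
    fun e he => by simpa using not_colorable_of_chromaticNumber_eq ((hnocrit e he).trans hχ)
  let e : Fin ((q + 1) * k) ≃ Fin (q + 1) × ZMod k := (Fintype.equivFinOfCardEq (by simp)).symm
  let G₀ := multipartiteCayley (0 : Fin (q + 1)) (differenceSet x D₀)
  refine ⟨G₀.comap e, fun v => ?_, ?_, fun D hD => ?_⟩
  · rw [natCard_neighborSet_comap]
    simpa using le_natCard_neighborSet_multipartiteCayley 0 (differenceSet x D₀) (e v)
  · simpa [hD₀] using (copyCount_comap_le H G₀ e).trans (copyCount_multipartiteCayley_le hH hHe)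
  · refine HasCopy.comap_deleteEdges H G₀ e _ ?_
    rw [← coe_image]
    refine hasCopy_deleteEdges_multipartiteCayley x.injective hpc hD₀sum _ ?_
    calc #(D.image (Sym2.map e)) * Fintype.card V ^ 2 ≤ #D * Fintype.card V ^ 2 := by
          gcongr; exact card_image_le
      _ < Fintype.card (ZMod k) * #D₀ := by simpa [hD₀] using hD

lemma half_le_natFloor {y : ℝ} (hy : 1 ≤ y) : y / 2 ≤ ⌊y⌋₊ := by
  have h₁ : (1 : ℝ) ≤ ⌊y⌋₊ := by exact_mod_cast Nat.le_floor (by simpa using hy)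
  linarith [Nat.lt_floor_add_one y]

theorem exists_robust_graph_of_one_le_mul {V : Type} [Fintype V] {H : SimpleGraph V} {q k : ℕ}
    (hχ : H.chromaticNumber = (q + 2 : ℕ))
    (hnocrit : ∀ e ∈ H.edgeSet, (H.deleteEdges {e}).chromaticNumber = H.chromaticNumber)
    (hk : k.Prime) (hVk : Fintype.card V ≤ k) {ε : ℝ} (hε : 0 < ε) (hε₀ : ε < 1 / 2)
    (hεk : 1 ≤ ε * k) :
    ∃ G : SimpleGraph (Fin ((q + 1) * k)),
      (∀ v, (q * k : ℝ) ≤ Nat.card (G.neighborSet v)) ∧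
      (_root_.copyCount H G : ℝ) ≤
        4 * Fintype.card V ^ 8 * ε ^ 2 * ((q + 1) * k : ℕ) ^ (Fintype.card V) ∧
      ∀ D : Finset (Sym2 (Fin ((q + 1) * k))),
        (#D : ℝ) * Fintype.card V ^ 2 ≤ ε * k ^ 2 / 4 → HasCopy H (G.deleteEdges D) := by
  set m := ⌊ε * k⌋₊
  have hm : (m : ℝ) ≤ ε * k := Nat.floor_le (by positivity)
  have hm' : ε * k / 2 ≤ m := half_le_natFloor hεk
  have hmk : 2 * m < k := by exact_mod_cast (show (2 * m : ℝ) < k by nlinarith)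
  obtain ⟨G, hdeg, hcount, hrob⟩ := exists_robust_graph_of_two_mul_lt hχ hnocrit hk hVk hmk
  refine ⟨G, fun v => by exact_mod_cast hdeg v, ?_, fun D hD => hrob D ?_⟩
  · set h := Fintype.card V
    have hh : 2 ≤ h := le_of_add_le_right (le_card_of_chromaticNumber_eq hχ)
    have hmn : (m : ℝ) ≤ ε * ((q + 1) * k : ℕ) :=
      hm.trans (by gcongr; exact_mod_cast Nat.le_mul_of_pos_left k q.succ_pos)
    calc (_root_.copyCount H G : ℝ) ≤ 4 * h ^ 8 * (((q + 1) * k : ℕ) : ℝ) ^ (h - 2) * m ^ 2 := by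
          refine (Nat.cast_le.2 hcount).trans_eq ?_
          push_cast
          ring
      _ ≤ 4 * h ^ 8 * (((q + 1) * k : ℕ) : ℝ) ^ (h - 2) * (ε * ((q + 1) * k : ℕ)) ^ 2 := by gcongr
      _ = 4 * h ^ 8 * ε ^ 2 * (((q + 1) * k : ℕ) : ℝ) ^ h := by
          rw [← Nat.sub_add_cancel hh, pow_add, Nat.add_sub_cancel]
          ring
  · have : (#D : ℝ) * Fintype.card V ^ 2 < k * m := by
      have : 0 < ε * k ^ 2 := by have := hk.pos; positivity
      nlinarith
    exact_mod_cast this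

theorem stmt_6 (h : ℕ) (H : SimpleGraph (Fin h)) (r : ℕ) (hr : 3 ≤ r)
    (hχ : H.chromaticNumber = (r : ℕ∞))
    (hnocrit : ∀ e ∈ H.edgeSet, (H.deleteEdges {e}).chromaticNumber = H.chromaticNumber) :
    ∃ C c ε₀ : ℝ, 0 < C ∧ 0 < c ∧ 0 < ε₀ ∧
      ∀ ε : ℝ, 0 < ε → ε < ε₀ → ∀ N : ℕ, ∃ n : ℕ, N ≤ n ∧ 0 < n ∧
        ∃ G : SimpleGraph (Fin n),
          (∀ v, (((r : ℝ) - 2) / ((r : ℝ) - 1)) * n ≤ (Nat.card (G.neighborSet v) : ℝ)) ∧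
          (_root_.copyCount H G : ℝ) ≤ C * ε ^ 2 * (n : ℝ) ^ h ∧
          ∀ D : Finset (Sym2 (Fin n)), ↑D ⊆ G.edgeSet → (D.card : ℝ) ≤ c * ε * n ^ 2 →
            HasCopy H (G.deleteEdges ↑D) := by
  obtain ⟨q, rfl⟩ : ∃ q, r = q + 2 := ⟨r - 2, by omega⟩
  have hh : 0 < h := by simpa using (le_card_of_chromaticNumber_eq hχ).trans_lt' (by omega)
  have hr₁ : ((q + 2 : ℕ) : ℝ) - 1 = q + 1 := by push_cast; ring
  have hr₂ : ((q + 2 : ℕ) : ℝ) - 2 = q := by push_cast; ring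
  rw [hr₁, hr₂]
  refine ⟨4 * h ^ 8, 1 / (4 * h ^ 2 * (q + 1) ^ 2), 1 / 2, by positivity, by positivity,
    by norm_num, fun ε hε hε₀ N => ?_⟩
  obtain ⟨k, hk, hkp⟩ := Nat.exists_infinite_primes (max N (max h ⌈ε⁻¹⌉₊))
  obtain ⟨hNk, hhk, hεk⟩ : N ≤ k ∧ h ≤ k ∧ ⌈ε⁻¹⌉₊ ≤ k := by omega
  replace hεk : 1 ≤ ε * k := by
    have := mul_le_mul_of_nonneg_left ((Nat.le_ceil _).trans (Nat.cast_le.2 hεk)) hε.le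
    rwa [mul_inv_cancel₀ hε.ne'] at this
  obtain ⟨G, hdeg, hcount, hrob⟩ :=
    exists_robust_graph_of_one_le_mul hχ hnocrit hkp (by simpa using hhk) hε hε₀ hεk
  refine ⟨(q + 1) * k, hNk.trans (Nat.le_mul_of_pos_left _ q.succ_pos),
    Nat.mul_pos q.succ_pos hkp.pos, G, fun v => ?_, by simpa using hcount, fun D _ hD => hrob D ?_⟩
  · calc (q : ℝ) / (q + 1) * ((q + 1) * k : ℕ) = q * k := by push_cast; field_simp
      _ ≤ _ := hdeg v
  · calc (#D : ℝ) * Fintype.card (Fin h) ^ 2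
        ≤ 1 / (4 * h ^ 2 * (q + 1) ^ 2) * ε * ((q + 1) * k : ℕ) ^ 2 * h ^ 2 := by
          rw [Fintype.card_fin]; gcongr
      _ = ε * k ^ 2 / 4 := by push_cast; field_simp
end

section
/- Let H be a graph on h vertices with chromatic number χ(H) = r ≥ 3, and let γ be a real number with (r−2)/(r−1) < γ ≤ 1. Then there exists μ > 0 such that for every ε > 0 and every positive integer n, every n-vertex graph G with minimum degree δ(G) ≥ γn that contains at least εn² pairwise edge-disjoint copies of H contains at least μ·ε·n^h labeled copies of H. (This is the upper bound δ_lin-rem(H) ≤ (r−2)/(r−1).) -/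
open SimpleGraph

/-!
Colour `H` properly with `r` colours, so that every map `Fin h → V(G)` which is a homomorphism
from the complete multipartite graph `K` on the colour classes is a homomorphism from `H`.
Put `β = (r - 1) min(γ, 1) - (r - 2) > 0`: the minimum degree condition gives every set
of fewer than `r` vertices at least `β n` common neighbours. Homomorphisms from `K` are counted
by adding one vertex at a time. While fewer than `r` vertices are placed, each new vertex has
`β n` choices; afterwards two vertices share a colour, hence are twins in `K`, and
Cauchy–Schwarz squares the count of the smaller pattern. This gives `β ^ 2 ^ h n ^ h`
homomorphisms, of which at most `h² n ^ (h - 1)` are not injective. Finally the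
`ε n²` edge-disjoint copies give `ε ≤ 1` and at least one copy, which handles small `n`.
-/

open Finset

open scoped Classical

lemma exists_perm_apply_zero_apply_one {k : ℕ} {u v : Fin (k + 2)} (huv : u ≠ v) :
    ∃ σ : Equiv.Perm (Fin (k + 2)), σ 0 = u ∧ σ 1 = v := by
  set τ := Equiv.swap 0 u
  have hτv : τ v ≠ 0 := fun h ↦ huv (by simpa [τ] using (congrArg τ h).symm)
  refine ⟨τ * Equiv.swap 1 (τ v), ?_, by simp [τ]⟩
  rw [Equiv.Perm.mul_apply, Equiv.swap_apply_of_ne_of_ne (by simp) hτv.symm]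
  simp [τ]

lemma card_filter_apply_eq_apply_le {α β : Type*} [Fintype α] [DecidableEq α] [Fintype β]
    {a b : α} (hab : a ≠ b) :
    #{f : α → β | f a = f b} ≤ Fintype.card β ^ (Fintype.card α - 1) := by
  calc #{f : α → β | f a = f b}
      ≤ #(univ : Finset ({w // w ≠ b} → β)) := by
        refine card_le_card_of_injOn (fun f w ↦ f w) (fun _ _ ↦ mem_univ _)
          fun f hf g hg hfg ↦ ?_
        simp only [coe_filter, mem_univ, true_and, Set.mem_ofPred_eq] at hf hg
        funext w
        by_cases hw : w = b
        · subst hw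
          rw [← hf, ← hg]
          exact congrFun hfg ⟨a, hab⟩
        · exact congrFun hfg ⟨w, hw⟩
    _ = Fintype.card β ^ (Fintype.card α - 1) := by simp

lemma card_filter_not_injective_le {α β : Type*} [Fintype α] [DecidableEq α] [Fintype β] :
    #{f : α → β | ¬ Function.Injective f} ≤
      Fintype.card α ^ 2 * Fintype.card β ^ (Fintype.card α - 1) := by
  calc #{f : α → β | ¬ Function.Injective f}
      ≤ #((univ : Finset α).offDiag.biUnion fun p ↦ {f : α → β | f p.1 = f p.2}) := by
        refine card_le_card fun f hf ↦ ?_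
        simp only [Function.Injective, mem_filter, mem_univ, true_and, not_forall] at hf
        obtain ⟨a, b, hfab, hab⟩ := hf
        simpa using ⟨a, b, hab, hfab⟩
    _ ≤ ∑ p ∈ (univ : Finset α).offDiag, Fintype.card β ^ (Fintype.card α - 1) :=
        card_biUnion_le.trans <| sum_le_sum fun p hp ↦
          card_filter_apply_eq_apply_le (mem_offDiag.1 hp).2.2
    _ ≤ _ := by
        rw [sum_const, smul_eq_mul, offDiag_card, card_univ, sq]
        exact Nat.mul_le_mul_right _ (Nat.sub_le _ _)

/-- For large `n` the error term is at most half the main term; for the finitely many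
small `n` we use `X ≥ 1`. -/
lemma exists_pos_mul_pow_le {c : ℝ} (hc : 0 < c) (h : ℕ) :
    ∃ μ > 0, ∀ (n : ℕ) (X : ℝ), 1 ≤ X → c * n ^ h ≤ X + h ^ 2 * n ^ (h - 1) →
      μ * n ^ h ≤ X := by
  set R : ℝ := 2 * h ^ 2 / c + 1
  have hR : 0 < R := by positivity
  refine ⟨min (c / 2) (R ^ h)⁻¹, by positivity, fun n X hX hcount ↦ ?_⟩
  by_cases hn : 2 * h ^ 2 / c ≤ n
  · have herr : (h : ℝ) ^ 2 * n ^ (h - 1) ≤ c / 2 * n ^ h := by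
      rcases h with _ | h
      · norm_num
        positivity
      rw [div_le_iff₀ hc] at hn
      rw [Nat.add_sub_cancel, pow_succ (n : ℝ)]
      nlinarith [mul_le_mul_of_nonneg_right hn (pow_nonneg (Nat.cast_nonneg (α := ℝ) n) h)]
    calc min (c / 2) (R ^ h)⁻¹ * n ^ h ≤ c / 2 * n ^ h := by gcongr; exact min_le_left _ _
      _ ≤ X := by linarith
  · calc min (c / 2) (R ^ h)⁻¹ * n ^ h ≤ (R ^ h)⁻¹ * R ^ h := by
          gcongr
          · exact min_le_right _ _
          · linarith
      _ = 1 := inv_mul_cancel₀ (by positivity)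
      _ ≤ X := hX

namespace SimpleGraph

variable {V : Type*} [Fintype V] {G : SimpleGraph V}

variable (G) in
noncomputable def homFinset {k : ℕ} (F : SimpleGraph (Fin k)) : Finset (Fin k → V) :=
  {f | ∀ ⦃u v⦄, F.Adj u v → G.Adj (f u) (f v)}

variable (G) in
noncomputable def extensionFinset {k : ℕ} (F : SimpleGraph (Fin (k + 1))) (g : Fin k → V) :
    Finset V :=
  {x | ∀ u, F.Adj u.succ 0 → G.Adj (g u) x}

@[simp]
lemma mem_homFinset {k : ℕ} {F : SimpleGraph (Fin k)} {f : Fin k → V} :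
    f ∈ G.homFinset F ↔ ∀ ⦃u v⦄, F.Adj u v → G.Adj (f u) (f v) := by
  simp [homFinset]

@[simp]
lemma mem_extensionFinset {k : ℕ} {F : SimpleGraph (Fin (k + 1))} {g : Fin k → V} {x : V} :
    x ∈ G.extensionFinset F g ↔ ∀ u, F.Adj u.succ 0 → G.Adj (g u) x := by
  simp [extensionFinset]

lemma card_homFinset_le {k : ℕ} (F : SimpleGraph (Fin k)) :
    #(G.homFinset F) ≤ Fintype.card V ^ k := by
  simpa using card_le_univ (G.homFinset F)

lemma homFinset_subset_of_le {k : ℕ} {F F' : SimpleGraph (Fin k)} (hF : F ≤ F') :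
    G.homFinset F' ⊆ G.homFinset F := fun _ hf ↦
  mem_homFinset.2 fun _ _ huv ↦ mem_homFinset.1 hf (hF huv)

lemma card_homFinset_comap_perm {k : ℕ} (F : SimpleGraph (Fin k)) (σ : Equiv.Perm (Fin k)) :
    #(G.homFinset (F.comap σ)) = #(G.homFinset F) := by
  refine card_nbij' (· ∘ σ.symm) (· ∘ σ) (fun f hf ↦ ?_) (fun f hf ↦ ?_)
    (fun _ _ ↦ by simp [Function.comp_assoc]) (fun _ _ ↦ by simp [Function.comp_assoc])
  · simp only [mem_coe, mem_homFinset, comap_adj] at hf ⊢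
    exact fun u v huv ↦ hf (by simpa using huv)
  · simp only [mem_coe, mem_homFinset, comap_adj] at hf ⊢
    exact fun u v huv ↦ hf huv

lemma cons_mem_homFinset_iff {k : ℕ} {F : SimpleGraph (Fin (k + 1))} {x : V} {g : Fin k → V} :
    Fin.cons x g ∈ G.homFinset F ↔
      g ∈ G.homFinset (F.comap Fin.succ) ∧ x ∈ G.extensionFinset F g := by
  simp only [mem_homFinset, mem_extensionFinset, comap_adj]
  refine ⟨fun hf ↦ ⟨fun _ _ huv ↦ by simpa using hf huv, fun _ hu ↦ by simpa using hf hu⟩, ?_⟩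
  rintro ⟨hg, hx⟩ u v huv
  cases u using Fin.cases <;> cases v using Fin.cases
  · exact absurd huv (F.loopless.irrefl 0)
  · simpa using (hx _ huv.symm).symm
  · simpa using hx _ huv
  · simpa using hg huv

lemma tail_mem_homFinset {k : ℕ} {F : SimpleGraph (Fin (k + 1))} {f : Fin (k + 1) → V}
    (hf : f ∈ G.homFinset F) : Fin.tail f ∈ G.homFinset (F.comap Fin.succ) := by
  rw [← Fin.cons_self_tail f, cons_mem_homFinset_iff] at hf
  exact hf.1

lemma card_filter_tail_eq {k : ℕ} {F : SimpleGraph (Fin (k + 1))} {g : Fin k → V}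
    (hg : g ∈ G.homFinset (F.comap Fin.succ)) :
    #{f ∈ G.homFinset F | Fin.tail f = g} = #(G.extensionFinset F g) := by
  refine card_nbij' (· 0) (Fin.cons · g) (fun f hf ↦ ?_) (fun x hx ↦ ?_)
    (fun f hf ↦ ?_) (fun x _ ↦ rfl)
  · simp only [coe_filter] at hf
    obtain ⟨hf, rfl⟩ := hf
    rw [← Fin.cons_self_tail f, cons_mem_homFinset_iff] at hf
    exact hf.2
  · simp only [coe_filter, mem_coe] at hx ⊢
    exact ⟨cons_mem_homFinset_iff.2 ⟨hg, hx⟩, Fin.tail_cons _ _⟩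
  · simp only [coe_filter] at hf
    simp only [← hf.2, Fin.cons_self_tail]

lemma sum_homFinset_tail {k : ℕ} (F : SimpleGraph (Fin (k + 1))) (φ : (Fin k → V) → ℕ) :
    ∑ f ∈ G.homFinset F, φ (Fin.tail f) =
      ∑ g ∈ G.homFinset (F.comap Fin.succ), #(G.extensionFinset F g) * φ g := by
  rw [← sum_fiberwise_of_maps_to fun _ ↦ tail_mem_homFinset]
  refine sum_congr rfl fun g hg ↦ ?_
  rw [sum_congr rfl fun f hf ↦ by rw [(mem_filter.1 hf).2], sum_const, card_filter_tail_eq hg,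
    smul_eq_mul]

lemma card_homFinset_eq_sum {k : ℕ} (F : SimpleGraph (Fin (k + 1))) :
    #(G.homFinset F) = ∑ g ∈ G.homFinset (F.comap Fin.succ), #(G.extensionFinset F g) := by
  simpa using G.sum_homFinset_tail F fun _ ↦ 1

lemma extensionFinset_eq_of_twins {k : ℕ} {F : SimpleGraph (Fin (k + 2))}
    (htwin : ∀ u, F.Adj 0 u ↔ F.Adj 1 u) (g : Fin (k + 1) → V) :
    G.extensionFinset F g = G.extensionFinset (F.comap Fin.succ) (Fin.tail g) := by
  have hswap (w : Fin k) : F.Adj w.succ.succ 0 ↔ F.Adj w.succ.succ 1 := by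
    rw [F.adj_comm, htwin, F.adj_comm]
  ext x
  simp only [mem_extensionFinset, comap_adj, Fin.succ_zero_eq_one, ← hswap]
  refine ⟨fun hx w hw ↦ hx w.succ hw, fun hx u hu ↦ ?_⟩
  cases u using Fin.cases with
  | zero => exact absurd ((htwin 1).1 hu.symm) (F.loopless.irrefl 1)
  | succ w => exact hx w hu

/-- Cauchy–Schwarz over the restrictions to the vertices other than the twins `0` and `1`:
the twins extend such a restriction independently, through the same set of vertices. -/
lemma sq_card_homFinset_comap_succ_le {k : ℕ} {F : SimpleGraph (Fin (k + 2))}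
    (htwin : ∀ u, F.Adj 0 u ↔ F.Adj 1 u) :
    #(G.homFinset (F.comap Fin.succ)) ^ 2 ≤ Fintype.card V ^ k * #(G.homFinset F) := by
  have hF : #(G.homFinset F) = ∑ g ∈ G.homFinset ((F.comap Fin.succ).comap Fin.succ),
      #(G.extensionFinset (F.comap Fin.succ) g) ^ 2 := by
    rw [card_homFinset_eq_sum, sum_congr rfl fun g _ ↦ by rw [extensionFinset_eq_of_twins htwin],
      sum_homFinset_tail (F.comap Fin.succ) fun g ↦ #(G.extensionFinset (F.comap Fin.succ) g)]
    simp only [sq]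
  rw [hF, card_homFinset_eq_sum]
  exact sq_sum_le_card_mul_sum_sq.trans (Nat.mul_le_mul_right _ (card_homFinset_le _))

lemma mul_card_le_card_commonNeighbors {γ : ℝ} (hγ : γ ≤ 1)
    (hdeg : ∀ v, γ * Fintype.card V ≤ G.degree v) {r : ℕ} {t : Finset V} (ht : #t < r) :
    ((r - 1) * γ - (r - 2)) * Fintype.card V ≤ #{x | ∀ v ∈ t, G.Adj v x} := by
  set n := Fintype.card V
  set S : Finset V := {x | ∀ v ∈ t, G.Adj v x}
  have hmiss : #Sᶜ ≤ ∑ v ∈ t, #(G.neighborFinset v)ᶜ := by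
    refine (card_le_card fun x hx ↦ ?_).trans card_biUnion_le
    simpa [S] using hx
  have hsum : (∑ v ∈ t, #(G.neighborFinset v)ᶜ : ℝ) ≤ #t * ((1 - γ) * n) := by
    rw [← nsmul_eq_mul, ← sum_const]
    refine sum_le_sum fun v _ ↦ ?_
    rw [card_compl, Nat.cast_sub (card_le_univ _), card_neighborFinset_eq_degree]
    linarith [hdeg v]
  have hS : (n : ℝ) = #S + #Sᶜ := by exact_mod_cast (card_add_card_compl S).symm
  have ht' : (#t : ℝ) ≤ r - 1 := by
    rw [le_sub_iff_add_le]
    exact_mod_cast ht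
  have hmiss' : (#Sᶜ : ℝ) ≤ ∑ v ∈ t, (#(G.neighborFinset v)ᶜ : ℝ) := by
    exact_mod_cast hmiss
  nlinarith [mul_le_mul_of_nonneg_right ht' (by positivity : 0 ≤ (1 - γ) * n)]

variable {r : ℕ} {β : ℝ}

lemma mul_le_card_homFinset_of_lt
    (hcommon : ∀ t : Finset V, #t < r → β * Fintype.card V ≤ #{x | ∀ v ∈ t, G.Adj v x})
    {k : ℕ} (hk : k < r) (c : Fin (k + 1) → Fin r) :
    #(G.homFinset ((⊤ : SimpleGraph (Fin r)).comap (c ∘ Fin.succ))) * (β * Fintype.card V) ≤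
      #(G.homFinset ((⊤ : SimpleGraph (Fin r)).comap c)) := by
  rw [card_homFinset_eq_sum, comap_comap, Nat.cast_sum, ← nsmul_eq_mul, ← sum_const]
  refine sum_le_sum fun g _ ↦
    (hcommon (univ.image g) (card_image_le.trans_lt (by simpa))).trans ?_
  refine Nat.cast_le.2 (card_le_card fun x hx ↦ ?_)
  simp only [mem_filter, mem_univ, true_and, mem_image, forall_exists_index,
    forall_apply_eq_imp_iff] at hx
  exact mem_extensionFinset.2 fun u _ ↦ hx u

/-- `σ` moves two vertices of the same colour, which are twins in the complete multipartite
graph, to the positions `0` and `1`. -/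
lemma exists_perm_sq_card_homFinset_le {m : ℕ} {c : Fin (m + 2) → Fin r}
    (hc : ¬ Function.Injective c) :
    ∃ σ : Equiv.Perm (Fin (m + 2)),
      #(G.homFinset ((⊤ : SimpleGraph (Fin r)).comap (c ∘ σ ∘ Fin.succ))) ^ 2 ≤
        Fintype.card V ^ m * #(G.homFinset ((⊤ : SimpleGraph (Fin r)).comap c)) := by
  obtain ⟨u, v, hcuv, huv⟩ := Function.not_injective_iff.1 hc
  obtain ⟨σ, hσ0, hσ1⟩ := exists_perm_apply_zero_apply_one huv
  refine ⟨σ, ?_⟩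
  have htwin (w : Fin (m + 2)) :
      (((⊤ : SimpleGraph (Fin r)).comap c).comap σ).Adj 0 w ↔
        (((⊤ : SimpleGraph (Fin r)).comap c).comap σ).Adj 1 w := by
    simp [hσ0, hσ1, hcuv]
  have := G.sq_card_homFinset_comap_succ_le htwin
  rwa [card_homFinset_comap_perm, comap_comap, comap_comap] at this

theorem pow_mul_pow_le_card_homFinset (hβ₀ : 0 ≤ β) (hβ₁ : β ≤ 1)
    (hcommon : ∀ t : Finset V, #t < r → β * Fintype.card V ≤ #{x | ∀ v ∈ t, G.Adj v x}) :
    ∀ {k : ℕ} (c : Fin k → Fin r), β ^ 2 ^ k * Fintype.card V ^ k ≤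
      #(G.homFinset ((⊤ : SimpleGraph (Fin r)).comap c)) := by
  set n := Fintype.card V
  intro k
  induction k with
  | zero =>
    intro c
    rw [eq_univ_of_forall fun f ↦ mem_homFinset.2 fun u ↦ u.elim0]
    simpa using hβ₁
  | succ k ih =>
    intro c
    by_cases hk : k < r
    · have hexp : β ^ 2 ^ (k + 1) ≤ β ^ (2 ^ k + 1) :=
        pow_le_pow_of_le_one hβ₀ hβ₁
          (by rw [pow_succ]; linarith [Nat.one_le_two_pow (n := k)])
      calc β ^ 2 ^ (k + 1) * n ^ (k + 1) ≤ β ^ (2 ^ k + 1) * n ^ (k + 1) :=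
            mul_le_mul_of_nonneg_right hexp (by positivity)
        _ = β ^ 2 ^ k * n ^ k * (β * n) := by ring
        _ ≤ _ := (mul_le_mul_of_nonneg_right (ih _) (by positivity)).trans
            (mul_le_card_homFinset_of_lt hcommon hk c)
    · obtain ⟨u, v, huv, hcuv⟩ := Fintype.exists_ne_map_eq_of_card_lt c (by simpa using hk)
      obtain ⟨m, rfl⟩ : ∃ m, k = m + 1 :=
        Nat.exists_eq_succ_of_ne_zero fun hk₀ ↦
          huv (by subst hk₀; exact Subsingleton.elim (α := Fin 1) _ _)
      obtain ⟨σ, hσ⟩ := G.exists_perm_sq_card_homFinset_le fun h ↦ huv (h hcuv)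
      rcases (Nat.zero_le n).eq_or_lt with hn | hn
      · simp [← hn]
      refine le_of_mul_le_mul_left ?_ (by positivity : (0 : ℝ) < n ^ m)
      calc (n : ℝ) ^ m * (β ^ 2 ^ (m + 2) * n ^ (m + 2))
          = (β ^ 2 ^ (m + 1) * n ^ (m + 1)) ^ 2 := by ring
        _ ≤ (#(G.homFinset ((⊤ : SimpleGraph (Fin r)).comap (c ∘ σ ∘ Fin.succ))) : ℝ) ^ 2 :=
            by gcongr; exact ih _
        _ ≤ n ^ m * #(G.homFinset ((⊤ : SimpleGraph (Fin r)).comap c)) := by exact_mod_cast hσ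

end SimpleGraph

section

variable {V : Type} [Fintype V]

lemma copyCount_eq_card {h : ℕ} (H : SimpleGraph (Fin h)) (G : SimpleGraph V) :
    _root_.copyCount H G = #{f ∈ G.homFinset H | Function.Injective f} := by
  let e : {φ : H →g G // Function.Injective φ} ≃
      {f // f ∈ {f ∈ G.homFinset H | Function.Injective f}} :=
    { toFun := fun φ ↦ ⟨φ.1, by simpa using ⟨fun _ _ huv ↦ φ.1.map_adj huv, φ.2⟩⟩
      invFun := fun f ↦ ⟨⟨f.1, fun huv ↦ (mem_homFinset.1 (mem_filter.1 f.2).1) huv⟩,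
        (mem_filter.1 f.2).2⟩
      left_inv := fun _ ↦ rfl
      right_inv := fun _ ↦ rfl }
  rw [_root_.copyCount, Nat.card_congr e, Nat.card_eq_finsetCard]

lemma card_homFinset_le_copyCount_add {h : ℕ} (H : SimpleGraph (Fin h)) (G : SimpleGraph V) :
    #(G.homFinset H) ≤ _root_.copyCount H G + h ^ 2 * Fintype.card V ^ (h - 1) := by
  rw [copyCount_eq_card, ← card_filter_add_card_filter_not Function.Injective]
  refine Nat.add_le_add_left ((card_le_card (filter_subset_filter _ (subset_univ _))).trans ?_) _
  simpa using card_filter_not_injective_le (α := Fin h) (β := V)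

lemma HasCopy.one_le_copyCount {h : ℕ} {H : SimpleGraph (Fin h)} {G : SimpleGraph V}
    (hHG : HasCopy H G) : 1 ≤ _root_.copyCount H G := by
  obtain ⟨f, hf⟩ := hHG
  rw [copyCount_eq_card, Nat.one_le_iff_ne_zero, Ne, card_eq_zero]
  exact ne_empty_of_mem (a := ⇑f) (by simpa using ⟨fun _ _ huv ↦ f.map_adj huv, hf⟩)

lemma SimpleGraph.Coloring.pow_mul_pow_le_copyCount_add {h r : ℕ} {H : SimpleGraph (Fin h)}
    (C : H.Coloring (Fin r)) {G : SimpleGraph V} {β : ℝ} (hβ₀ : 0 ≤ β) (hβ₁ : β ≤ 1)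
    (hcommon : ∀ t : Finset V, #t < r → β * Fintype.card V ≤ #{x | ∀ v ∈ t, G.Adj v x}) :
    β ^ 2 ^ h * Fintype.card V ^ h ≤
      (_root_.copyCount H G : ℝ) + h ^ 2 * Fintype.card V ^ (h - 1) := by
  have hle : H ≤ (⊤ : SimpleGraph (Fin r)).comap C := fun _ _ huv ↦ C.map_rel huv
  exact_mod_cast (G.pow_mul_pow_le_card_homFinset hβ₀ hβ₁ hcommon C).trans
    (Nat.cast_le.2 ((card_le_card (homFinset_subset_of_le hle)).trans
      (card_homFinset_le_copyCount_add H G)))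

variable {W : Type} {H : SimpleGraph W} {G : SimpleGraph V} {m : ℕ}

lemma HasEdgeDisjointCopies.le_card_edgeFinset (hH : H ≠ ⊥)
    (hm : HasEdgeDisjointCopies H G m) : m ≤ #G.edgeFinset := by
  obtain ⟨u, v, huv⟩ := ne_bot_iff_exists_adj.1 hH
  obtain ⟨f, -, hdisj⟩ := hm
  have hmem (i : Fin m) : s(f i u, f i v) ∈ copyEdges H (f i) := ⟨s(u, v), huv, rfl⟩
  simpa using card_le_card_of_injOn (s := univ) (fun i ↦ s(f i u, f i v))
    (fun i _ ↦ by simpa using (f i).map_adj huv)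
    fun i _ j _ hij ↦ by_contra fun hne ↦
      Set.disjoint_left.1 (hdisj hne) (hmem i) (by simpa only [hij] using hmem j)

lemma HasEdgeDisjointCopies.le_card_sq (hH : H ≠ ⊥) (hm : HasEdgeDisjointCopies H G m) :
    m ≤ Fintype.card V ^ 2 :=
  (hm.le_card_edgeFinset hH).trans
    (card_edgeFinset_le_card_choose_two.trans (Nat.choose_le_pow _ _))

end

lemma HasEdgeDisjointCopies.hasCopy {V W : Type} {H : SimpleGraph W} {G : SimpleGraph V}
    {m : ℕ} (hm : HasEdgeDisjointCopies H G m) (hm₀ : 0 < m) : HasCopy H G :=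
  let ⟨f, hf, _⟩ := hm
  ⟨f ⟨0, hm₀⟩, hf _⟩

lemma mul_min_one_sub_mem_Ioc {r : ℕ} {γ : ℝ} (hr : 2 ≤ r)
    (hγ : ((r : ℝ) - 2) / ((r : ℝ) - 1) < γ) :
    (r - 1) * min γ 1 - (r - 2) ∈ Set.Ioc (0 : ℝ) 1 := by
  have hr' : (1 : ℝ) ≤ r - 1 := by
    rw [le_sub_iff_add_le]
    exact_mod_cast (by omega : 1 + 1 ≤ r)
  have hmin := lt_min hγ ((div_lt_one (by linarith)).2 (by linarith))
  rw [div_lt_iff₀ (by linarith)] at hmin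
  constructor
  · linarith
  · nlinarith [min_le_right γ 1]

theorem stmt_7_general (h : ℕ) (H : SimpleGraph (Fin h)) (r : ℕ) (hr : 3 ≤ r)
    (hχ : H.chromaticNumber = (r : ℕ∞)) (γ : ℝ)
    (hγ₁ : ((r : ℝ) - 2) / ((r : ℝ) - 1) < γ) :
    ∃ μ : ℝ, 0 < μ ∧
      ∀ ε : ℝ, 0 < ε → ∀ n : ℕ, 0 < n → ∀ G : SimpleGraph (Fin n),
        (∀ v, γ * n ≤ (Nat.card (G.neighborSet v) : ℝ)) →
        (∃ m : ℕ, ε * n ^ 2 ≤ (m : ℝ) ∧ HasEdgeDisjointCopies H G m) →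
        μ * ε * (n : ℝ) ^ h ≤ (_root_.copyCount H G : ℝ) := by
  obtain ⟨C⟩ : H.Colorable r := chromaticNumber_le_iff_colorable.1 hχ.le
  have hH : H ≠ ⊥ :=
    two_le_chromaticNumber_iff_ne_bot.1 (hχ ▸ by exact_mod_cast (by omega : 2 ≤ r))
  obtain ⟨hβ₀, hβ₁⟩ := mul_min_one_sub_mem_Ioc (by omega) hγ₁
  obtain ⟨μ, hμ, hμX⟩ := exists_pos_mul_pow_le (pow_pos hβ₀ (2 ^ h)) h
  refine ⟨μ, hμ, fun ε hε n hn G hdeg ⟨m, hm, hcopies⟩ ↦ ?_⟩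
  have hdeg' (v : Fin n) : min γ 1 * Fintype.card (Fin n) ≤ G.degree v := by
    rw [Fintype.card_fin, ← card_neighborSet_eq_degree, ← Nat.card_eq_fintype_card]
    exact (mul_le_mul_of_nonneg_right (min_le_left γ 1) n.cast_nonneg).trans (hdeg v)
  have hcount := C.pow_mul_pow_le_copyCount_add hβ₀.le hβ₁ fun _ ht ↦
    G.mul_card_le_card_commonNeighbors (min_le_right γ 1) hdeg' ht
  have hmn : (m : ℝ) ≤ n ^ 2 := by exact_mod_cast (by simpa using hcopies.le_card_sq hH)
  have hm₀ : 0 < m := by exact_mod_cast (by positivity : (0 : ℝ) < ε * n ^ 2).trans_le hm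
  have hε₁ : ε ≤ 1 := le_of_mul_le_mul_right (by linarith) (by positivity : (0 : ℝ) < n ^ 2)
  calc μ * ε * n ^ h ≤ μ * n ^ h := by gcongr; exact mul_le_of_le_one_right hμ.le hε₁
    _ ≤ _root_.copyCount H G :=
      hμX n _ (by exact_mod_cast (hcopies.hasCopy hm₀).one_le_copyCount) (by simpa using hcount)

theorem stmt_7 (h : ℕ) (H : SimpleGraph (Fin h)) (r : ℕ) (hr : 3 ≤ r)
    (hχ : H.chromaticNumber = (r : ℕ∞)) (γ : ℝ)
    (hγ₁ : ((r : ℝ) - 2) / ((r : ℝ) - 1) < γ) (hγ₂ : γ ≤ 1) :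
    ∃ μ : ℝ, 0 < μ ∧
      ∀ ε : ℝ, 0 < ε → ∀ n : ℕ, 0 < n → ∀ G : SimpleGraph (Fin n),
        (∀ v, γ * n ≤ (Nat.card (G.neighborSet v) : ℝ)) →
        (∃ m : ℕ, ε * n ^ 2 ≤ (m : ℝ) ∧ HasEdgeDisjointCopies H G m) →
        μ * ε * (n : ℝ) ^ h ≤ (_root_.copyCount H G : ℝ) :=
  stmt_7_general h H r hr hχ γ hγ₁
end

section
/- Let k ≥ 2 be an integer and let H be a graph with chromatic number χ(H) = 3 that has a critical edge xy and whose odd girth is at least 2k+1. Then there is a partition V(H) = A₁ ∪ A₂ ∪ ⋯ ∪ A_{2k+1} into pairwise disjoint sets with A₁ = {x} and A₂ = {y}, such that every edge of H has one endpoint in A_i and the other in A_{i+1} for some i ∈ {1,…,2k+1} (indices taken modulo 2k+1). In particular, H is homomorphic to the cycle C_{2k+1}. -/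
open SimpleGraph

/-!
Since `xy` is critical, `G = H - xy` is bipartite, and in any 2-colouring of `G` the vertices
`x` and `y` get the same colour and lie in the same component (otherwise recolouring would
2-colour `H`). A shortest `x`–`y` path in `G` is even and closes with `xy` to an odd cycle,
so `d(x, y) ≥ 2k` in `G`.

Put a vertex `v` of the component of `x` on level `max (2k - d(y, v)) (min (d(x, v)) m(v))`,
where `m(v) ∈ {k, k + 1}` has the parity of the colour of `v`; every other vertex goes on level
`m(v)`. Each of the three quantities moves by at most one along an edge of `G` and has the parity
of the colour, so adjacent vertices land on consecutive levels. Only `x` is on level `0` and only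
`y` on level `2k`. Reading the negated levels modulo `2k + 1` then gives the partition, and the
edge `xy` joins the classes `0` and `1`.
-/

lemma ZMod.intCast_eq_intCast_iff_of_lt {n : ℕ} {a b : ℤ} (ha₀ : 0 ≤ a) (ha : a < n)
    (hb₀ : 0 ≤ b) (hb : b < n) : (a : ZMod n) = b ↔ a = b := by
  rw [ZMod.intCast_eq_intCast_iff_dvd_sub]
  refine ⟨fun h => ?_, fun h => by rw [h, sub_self]; exact dvd_zero _⟩
  have := Int.eq_zero_of_abs_lt_dvd h (abs_lt.mpr ⟨by omega, by omega⟩)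
  omega

lemma hasCopy_cycleGraph_of_isPath {V : Type} {G : SimpleGraph V} {u v : V} {p : G.Walk u v}
    (hp : p.IsPath) (h : G.Adj v u) (he : s(v, u) ∉ p.edges) :
    HasCopy (cycleGraph (p.length + 1)) G := by
  have hc : (Walk.cons h p).IsCycle := (Walk.cons_isCycle_iff p h).mpr ⟨hp, he⟩
  obtain ⟨e⟩ := (cycleGraph_isContained_iff (by simpa using hc.three_le_length)).mpr
    ⟨v, _, hc, rfl⟩
  exact ⟨e.toHom, e.injective⟩

lemma two_mul_le_dist_deleteEdges {V : Type} {G : SimpleGraph V} {k : ℕ} {x y : V}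
    (hog : ∀ m : ℕ, 3 ≤ m → Odd m → m < 2 * k + 1 → ¬ HasCopy (cycleGraph m) G)
    (hxy : G.Adj x y) (hreach : (G.deleteEdges {s(x, y)}).Reachable x y)
    (heven : Even ((G.deleteEdges {s(x, y)}).dist x y)) :
    2 * k ≤ (G.deleteEdges {s(x, y)}).dist x y := by
  obtain ⟨p, hp, hlen⟩ := hreach.exists_path_of_dist
  have hne : (G.deleteEdges {s(x, y)}).dist x y ≠ 0 := by simp [hreach, hxy.ne]
  have he : s(y, x) ∉ (p.mapLe (deleteEdges_le _)).edges := by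
    rw [Walk.edges_mapLe_eq_edges]
    intro h
    simpa [Sym2.eq_swap] using p.edges_subset_edgeSet h
  have hcopy := hasCopy_cycleGraph_of_isPath (hp.mapLe _) hxy.symm he
  rw [Walk.length_mapLe, hlen] at hcopy
  have htwo := heven.two_dvd
  by_contra hlt
  exact hog _ (by omega) heven.add_one (by omega) hcopy

namespace SimpleGraph

variable {V : Type*} {G : SimpleGraph V}

lemma Coloring.nonempty_of_deleteEdges {α : Type*} {x y : V}
    (c : (G.deleteEdges {s(x, y)}).Coloring α) (h : c x ≠ c y) : Nonempty (G.Coloring α) := by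
  refine ⟨Coloring.mk c fun {u v} huv => ?_⟩
  by_cases he : s(u, v) = s(x, y)
  · rcases Sym2.eq_iff.mp he with ⟨rfl, rfl⟩ | ⟨rfl, rfl⟩
    exacts [h, h.symm]
  · exact c.valid (by simp [huv, he])

lemma Coloring.exists_ne_of_not_reachable (c : G.Coloring Bool) {x y : V}
    (h : ¬ G.Reachable x y) : ∃ c' : G.Coloring Bool, c' x ≠ c' y := by
  classical
  by_cases hc : c x = c y
  · refine ⟨Coloring.mk (fun v => if G.Reachable x v then c v else !c v)
      fun {u v} huv => ?_, ?_⟩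
    · have hu : G.Reachable x u ↔ G.Reachable x v :=
        ⟨fun hu => hu.trans huv.reachable, fun hv => hv.trans huv.symm.reachable⟩
      have := c.valid huv
      split_ifs <;> simp_all
    · show (if G.Reachable x x then c x else !c x) ≠ (if G.Reachable x y then c y else !c y)
      simp [h, hc]
  · exact ⟨c, hc⟩

lemma Coloring.eq_of_deleteEdges_of_not_colorable (hG : ¬ G.Colorable 2) {x y : V}
    (c : (G.deleteEdges {s(x, y)}).Coloring Bool) : c x = c y :=
  not_not.mp fun h => hG (by simpa using (c.nonempty_of_deleteEdges h).some.colorable)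

lemma reachable_deleteEdges_of_not_colorable (hG : ¬ G.Colorable 2) {x y : V}
    (c : (G.deleteEdges {s(x, y)}).Coloring Bool) : (G.deleteEdges {s(x, y)}).Reachable x y :=
  not_not.mp fun h =>
    have ⟨c', hc'⟩ := c.exists_ne_of_not_reachable h
    hc' (c'.eq_of_deleteEdges_of_not_colorable hG)

lemma Coloring.even_dist_iff (c : G.Coloring Bool) {u v : V} (h : G.Reachable u v) :
    Even (G.dist u v) ↔ c u = c v := by
  obtain ⟨p, hp⟩ := h.exists_walk_length_eq_dist
  rw [← hp, c.even_length_iff_congr p, Bool.coe_iff_coe]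

lemma consecutive_of_deleteEdges {M : Type*} [Add M] [One M] {f : V → M} {x y : V}
    (hf : ∀ u v, (G.deleteEdges {s(x, y)}).Adj u v → f v = f u + 1 ∨ f u = f v + 1)
    (hxy : f y = f x + 1) (u v : V) (huv : G.Adj u v) : f v = f u + 1 ∨ f u = f v + 1 := by
  by_cases he : s(u, v) = s(x, y)
  · rcases Sym2.eq_iff.mp he with ⟨rfl, rfl⟩ | ⟨rfl, rfl⟩
    exacts [.inl hxy, .inr hxy]
  · exact hf u v (by simp [huv, he])

lemma nonempty_hom_cycleGraph_of_consecutive {n : ℕ} [NeZero n] (hn : 1 < n) (f : V → Fin n)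
    (hf : ∀ u v, G.Adj u v → f v = f u + 1 ∨ f u = f v + 1) :
    Nonempty (G →g cycleGraph n) := by
  have h1 : (1 : Fin n).val = 1 := by rw [Fin.val_one', Nat.mod_eq_of_lt hn]
  refine ⟨⟨f, fun {u v} huv => cycleGraph_adj'.mpr ?_⟩⟩
  rcases hf u v huv with h | h
  · right; rw [h, add_sub_cancel_left, h1]
  · left; rw [h, add_sub_cancel_left, h1]

def Coloring.midLevel (c : G.Coloring Bool) (x : V) (k : ℕ) (v : V) : ℤ :=
  if (Even k ↔ c v = c x) then k else k + 1

open scoped Classical in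
noncomputable def Coloring.cyclePos (c : G.Coloring Bool) (x y : V) (k : ℕ) (v : V) : ℤ :=
  if G.Reachable x v then max (2 * k - G.dist y v) (min (G.dist x v) (c.midLevel x k v))
  else c.midLevel x k v

section CyclePos

variable (c : G.Coloring Bool) {x y : V} {k : ℕ}

lemma Coloring.midLevel_mem (v : V) : k ≤ c.midLevel x k v ∧ c.midLevel x k v ≤ k + 1 := by
  unfold midLevel
  split_ifs <;> omega

lemma Coloring.even_midLevel_iff (v : V) : Even (c.midLevel x k v) ↔ c v = c x := by
  unfold midLevel
  split_ifs with h <;> simp [← Nat.not_even_iff_odd] <;> tauto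

lemma Coloring.even_cyclePos_iff (hcxy : c x = c y) (hreach : G.Reachable x y) (v : V) :
    Even (c.cyclePos x y k v) ↔ c v = c x := by
  unfold cyclePos
  split_ifs with hv
  · have hx := c.even_dist_iff hv
    have hy := c.even_dist_iff (hreach.symm.trans hv)
    rcases max_choice (2 * k - G.dist y v : ℤ) (min (G.dist x v) (c.midLevel x k v))
      with h | h <;> rw [h]
    · simp [Int.even_sub, parity_simps, hy, hcxy, eq_comm]
    · rcases min_choice (G.dist x v : ℤ) (c.midLevel x k v) with h' | h' <;> rw [h']
      · simp [hx, eq_comm]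
      · exact c.even_midLevel_iff v
  · exact c.even_midLevel_iff v

lemma Coloring.abs_cyclePos_sub_le {u v : V} (huv : G.Adj u v) :
    |c.cyclePos x y k u - c.cyclePos x y k v| ≤ 1 := by
  have hx := huv.diff_dist_adj (u := x)
  have hy := huv.diff_dist_adj (u := y)
  have hu := c.midLevel_mem (x := x) (k := k) u
  have hv := c.midLevel_mem (x := x) (k := k) v
  have hreach : G.Reachable x u ↔ G.Reachable x v :=
    ⟨fun h => h.trans huv.reachable, fun h => h.trans huv.symm.reachable⟩
  unfold cyclePos
  rw [abs_le]
  split_ifs <;> first | tauto | omega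

lemma Coloring.cyclePos_eq_add_one_or_of_adj (hcxy : c x = c y) (hreach : G.Reachable x y)
    {u v : V} (huv : G.Adj u v) :
    c.cyclePos x y k v = c.cyclePos x y k u + 1 ∨
      c.cyclePos x y k u = c.cyclePos x y k v + 1 := by
  have hpar : Even (c.cyclePos x y k u) ↔ ¬ Even (c.cyclePos x y k v) := by
    rw [c.even_cyclePos_iff hcxy hreach, c.even_cyclePos_iff hcxy hreach]
    have hne : c u ≠ c v := c.valid huv
    revert hne
    cases c u <;> cases c v <;> cases c x <;> decide
  have habs := c.abs_cyclePos_sub_le (x := x) (y := y) (k := k) huv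
  rw [Int.even_iff, Int.even_iff] at hpar
  rw [abs_le] at habs
  omega

lemma Coloring.cyclePos_mem (hk : 1 ≤ k) (v : V) :
    0 ≤ c.cyclePos x y k v ∧ c.cyclePos x y k v ≤ 2 * k := by
  have := c.midLevel_mem (x := x) (k := k) v
  unfold cyclePos
  split_ifs <;> omega

lemma Coloring.cyclePos_eq_zero_iff (hk : 1 ≤ k) (hdist : 2 * k ≤ G.dist x y) (v : V) :
    c.cyclePos x y k v = 0 ↔ v = x := by
  have := c.midLevel_mem (x := x) (k := k) v
  unfold cyclePos
  constructor
  · intro h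
    split_ifs at h with hv
    · exact (hv.dist_eq_zero_iff.mp (by omega)).symm
    · omega
  · rintro rfl
    rw [if_pos (Reachable.refl _), dist_self, dist_comm]
    omega

lemma Coloring.cyclePos_eq_two_mul_iff (hk : 2 ≤ k) (hreach : G.Reachable x y) (v : V) :
    c.cyclePos x y k v = 2 * k ↔ v = y := by
  have := c.midLevel_mem (x := x) (k := k) v
  unfold cyclePos
  constructor
  · intro h
    split_ifs at h with hv
    · exact ((hreach.symm.trans hv).dist_eq_zero_iff.mp (by omega)).symm
    · omega
  · rintro rfl
    rw [if_pos hreach, dist_self]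
    omega

lemma Coloring.exists_zmod_labelling (hcxy : c x = c y) (hreach : G.Reachable x y) (hk : 2 ≤ k)
    (hdist : 2 * k ≤ G.dist x y) :
    ∃ f : V → ZMod (2 * k + 1), (∀ v, f v = 0 ↔ v = x) ∧ (∀ v, f v = 1 ↔ v = y) ∧
      ∀ u v, G.Adj u v → f v = f u + 1 ∨ f u = f v + 1 := by
  have hcast (v : V) {a : ℤ} (ha₀ : 0 ≤ a) (ha : a ≤ 2 * k) :
      ((c.cyclePos x y k v : ℤ) : ZMod (2 * k + 1)) = a ↔ c.cyclePos x y k v = a := by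
    obtain ⟨h₀, h⟩ := c.cyclePos_mem (x := x) (y := y) (k := k) (by omega) v
    exact ZMod.intCast_eq_intCast_iff_of_lt h₀ (by push_cast; omega) ha₀ (by push_cast; omega)
  refine ⟨fun v => -(c.cyclePos x y k v : ZMod (2 * k + 1)), fun v => ?_, fun v => ?_,
    fun u v huv => ?_⟩
  · rw [neg_eq_zero, ← Int.cast_zero, hcast v le_rfl (by omega),
      c.cyclePos_eq_zero_iff (by omega) hdist]
  · have h2k : ((2 * k : ℤ) : ZMod (2 * k + 1)) = -1 := by
      rw [eq_neg_iff_add_eq_zero]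
      exact_mod_cast ZMod.natCast_self (2 * k + 1)
    rw [neg_eq_iff_eq_neg, ← h2k, hcast v (by omega) le_rfl, c.cyclePos_eq_two_mul_iff hk hreach]
  · dsimp only
    rcases c.cyclePos_eq_add_one_or_of_adj (k := k) hcxy hreach huv with h | h
    · right; rw [h]; push_cast; ring
    · left; rw [h]; push_cast; ring

end CyclePos

end SimpleGraph

theorem stmt_9_general {V : Type} (H : SimpleGraph V) (k : ℕ) (hk : 2 ≤ k)
    (hχ : H.chromaticNumber = 3) (x y : V) (hxy : H.Adj x y)
    (hcrit : (H.deleteEdges {s(x, y)}).chromaticNumber < H.chromaticNumber)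
    (hog : ∀ m : ℕ, 3 ≤ m → Odd m → m < 2 * k + 1 → ¬ HasCopy (cycleGraph m) H) :
    (∃ A : Fin (2 * k + 1) → Set V,
      A 0 = {x} ∧ A 1 = {y} ∧
      (Pairwise fun i j => Disjoint (A i) (A j)) ∧
      (⋃ i, A i) = Set.univ ∧
      (∀ u v : V, H.Adj u v →
        ∃ i : Fin (2 * k + 1), (u ∈ A i ∧ v ∈ A (i + 1)) ∨ (v ∈ A i ∧ u ∈ A (i + 1)))) ∧
    Nonempty (H →g cycleGraph (2 * k + 1)) := by
  have hH : ¬ H.Colorable 2 := fun h => absurd (hχ ▸ h.chromaticNumber_le) (by norm_num)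
  have hG : (H.deleteEdges {s(x, y)}).Colorable 2 :=
    chromaticNumber_le_iff_colorable.mp <|
      Order.le_of_lt_add_one (hcrit.trans_eq (by rw [hχ]; norm_num))
  let c := (H.deleteEdges {s(x, y)}).recolorOfEquiv finTwoEquiv hG.some
  have hcxy := c.eq_of_deleteEdges_of_not_colorable hH
  have hreach := reachable_deleteEdges_of_not_colorable hH c
  have hdist := two_mul_le_dist_deleteEdges hog hxy hreach ((c.even_dist_iff hreach).mpr hcxy)
  obtain ⟨f, hfx, hfy, hf⟩ := c.exists_zmod_labelling hcxy hreach hk hdist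
  have hfH := consecutive_of_deleteEdges hf (by rw [(hfx x).mpr rfl, (hfy y).mpr rfl, zero_add])
  -- `ZMod (2 * k + 1)` is `Fin (2 * k + 1)` by definition.
  refine ⟨⟨fun i => f ⁻¹' {i}, Set.ext hfx, Set.ext hfy,
    fun i j hij => (Set.disjoint_singleton.mpr hij).preimage f,
    Set.iUnion_eq_univ_iff.mpr fun v => ⟨f v, rfl⟩, fun u v huv => ?_⟩,
    nonempty_hom_cycleGraph_of_consecutive (by omega) f hfH⟩
  rcases hfH u v huv with h | h
  exacts [⟨f u, .inl ⟨rfl, h⟩⟩, ⟨f v, .inr ⟨rfl, h⟩⟩]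

theorem stmt_9 {V : Type} [Fintype V] (H : SimpleGraph V) (k : ℕ) (hk : 2 ≤ k)
    (hχ : H.chromaticNumber = 3) (x y : V) (hxy : H.Adj x y)
    (hcrit : (H.deleteEdges {s(x, y)}).chromaticNumber < H.chromaticNumber)
    (hog : ∀ m : ℕ, 3 ≤ m → Odd m → m < 2 * k + 1 → ¬ HasCopy (cycleGraph m) H) :
    (∃ A : Fin (2 * k + 1) → Set V,
      A 0 = {x} ∧ A 1 = {y} ∧
      (Pairwise fun i j => Disjoint (A i) (A j)) ∧
      (⋃ i, A i) = Set.univ ∧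
      (∀ u v : V, H.Adj u v →
        ∃ i : Fin (2 * k + 1), (u ∈ A i ∧ v ∈ A (i + 1)) ∨ (v ∈ A i ∧ u ∈ A (i + 1)))) ∧
    Nonempty (H →g cycleGraph (2 * k + 1)) :=
  stmt_9_general H k hk hχ x y hxy hcrit hog
end

section
/- Let H be a graph on h vertices with chromatic number χ(H) = 3 that has a critical edge and contains a triangle. Then for every α > 0 there exists μ > 0 such that for every ε > 0 and every positive integer n, every n-vertex graph G with minimum degree δ(G) ≥ (1/3 + α)n that contains at least εn² pairwise edge-disjoint copies of H contains at least μ·ε·n^h labeled copies of H. (This yields δ_lin-rem(H) ≤ 1/3.) -/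
open SimpleGraph

/-!
Let `xy` be a critical edge, so `H - xy` has a proper `2`-colouring `c`. The triangle of `H` must
use `xy`, so some `z` is adjacent to both `x` and `y`, and `c x = c y ≠ c z`. In `G`, the images of
`x, y, z` under any copy of `H` form a triangle, and since the three neighbourhoods have total size
at least `(1 + 3α) n`, one of its edges `ab` has at least `α n` common neighbours. Edge-disjoint
copies give distinct such ordered edges, so there are at least `ε n²` of them.

For each such `ab`, send `x ↦ a`, `y ↦ b`, the rest of the colour class of `x` anywhere, and the
other colour class into the common neighbourhood `S` of `a` and `b`, adjacent to everything already
placed. Counting these maps is counting copies of a complete bipartite graph between `V` and `S`, so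
Jensen's inequality (Sidorenko's inequality for complete bipartite graphs) together with the
minimum degree gives `≥ c₀ n^(h-2)` homomorphisms, of which at most `h² n^(h-3)` are not injective.
Summing over the `ε n²` pairs gives `≳ ε n^h` copies for large `n`; for small `n` the `ε n²`
edge-disjoint copies themselves suffice.
-/

open Finset

lemma card_add_card_add_card_le {α : Type*} [Fintype α] [DecidableEq α] (A B C : Finset α) :
    #A + #B + #C ≤ Fintype.card α + (#(A ∩ B) + #(A ∩ C) + #(B ∩ C)) := by
  have hAB := card_union_add_card_inter A B
  have hABC := card_union_add_card_inter (A ∪ B) C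
  have hsub : #((A ∪ B) ∩ C) ≤ #(A ∩ C) + #(B ∩ C) := by
    rw [union_inter_distrib_right]; exact card_union_le _ _
  have huniv := card_le_univ (A ∪ B ∪ C)
  omega

section BipartiteCount

variable {A B V W : Type*} [Fintype A] [DecidableEq A] [Fintype V]

lemma card_filter_forall [Fintype B] [DecidableEq B] [Fintype W] (p : W → Prop) [DecidablePred p] :
    #{ψ : B → W | ∀ b, p (ψ b)} = #{w | p w} ^ Fintype.card B := by
  have : ({ψ : B → W | ∀ b, p (ψ b)} : Finset _) = Fintype.piFinset fun _ => {w | p w} := by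
    ext; simp
  rw [this, Fintype.card_piFinset, prod_const, card_univ]

lemma sum_card_filter_forall_rel (r : V → W → Prop) [DecidableRel r] (S : Finset W) :
    ∑ φ : A → V, #{w ∈ S | ∀ a, r (φ a) w} = ∑ w ∈ S, #{v | r v w} ^ Fintype.card A := by
  simp_rw [card_filter _ S]
  rw [sum_comm]
  refine sum_congr rfl fun w _ => ?_
  rw [← card_filter, ← card_filter_forall]

lemma pow_mul_pow_le_card_bipartite_maps [Fintype B] [DecidableEq B] [Nonempty B] [Fintype W]
    [DecidableEq W] (r : V → W → Prop) [DecidableRel r] (S : Finset W) {s d : ℝ} (hs₀ : 0 ≤ s)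
    (hs : s ≤ #S) (hd₀ : 0 ≤ d) (hd : ∀ w ∈ S, d ≤ #{v | r v w}) :
    s ^ Fintype.card B * d ^ (Fintype.card A * Fintype.card B) ≤
      #{φψ : (A → V) × (B → W) | ∀ b, φψ.2 b ∈ S ∧ ∀ a, r (φψ.1 a) (φψ.2 b)} *
        (Fintype.card V ^ Fintype.card A) ^ (Fintype.card B - 1) := by
  set T : (A → V) → Finset W := fun φ => {w ∈ S | ∀ a, r (φ a) w}
  have hcount : #{φψ : (A → V) × (B → W) | ∀ b, φψ.2 b ∈ S ∧ ∀ a, r (φψ.1 a) (φψ.2 b)} =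
      ∑ φ, #(T φ) ^ Fintype.card B := by
    rw [card_filter, Fintype.sum_prod_type]
    refine sum_congr rfl fun φ _ => ?_
    have hT : T φ = ({w | w ∈ S ∧ ∀ a, r (φ a) w} : Finset W) := by ext; simp [T]
    rw [← card_filter, hT, ← card_filter_forall]
  have hsum : s * d ^ Fintype.card A ≤ ∑ φ, (#(T φ) : ℝ) := by
    have hdeg : (#S : ℝ) * d ^ Fintype.card A ≤ ∑ w ∈ S, (#{v | r v w} : ℝ) ^ Fintype.card A := by
      rw [← nsmul_eq_mul]
      exact card_nsmul_le_sum _ _ _ fun w hw => pow_le_pow_left₀ hd₀ (hd w hw) _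
    calc s * d ^ Fintype.card A ≤ #S * d ^ Fintype.card A := by gcongr
      _ ≤ _ := hdeg
      _ = _ := by exact_mod_cast (sum_card_filter_forall_rel r S).symm
  obtain ⟨k, hk⟩ := Nat.exists_eq_add_one_of_ne_zero (Fintype.card_ne_zero (α := B))
  have hjensen := pow_sum_le_card_mul_sum_pow (s := univ) (f := fun φ : A → V => (#(T φ) : ℝ))
    (fun _ _ => Nat.cast_nonneg _) k
  rw [card_univ, Fintype.card_fun] at hjensen
  rw [hcount, hk, Nat.add_sub_cancel, pow_mul, ← mul_pow]
  push_cast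
  calc (s * d ^ Fintype.card A) ^ (k + 1) ≤ (∑ φ, (#(T φ) : ℝ)) ^ (k + 1) := by gcongr
    _ ≤ _ := by rw [mul_comm]; exact_mod_cast hjensen

end BipartiteCount

lemma min_pow_mul_pow_le_of_bipartite_bound {α N P : ℝ} {p q k : ℕ} (hα : 0 ≤ α) (hN : 0 < N)
    (hq : q ≠ 0) (hk : q * (p + 1) ≤ k)
    (hP : (α * N) ^ q * (N / 3) ^ (p * q) ≤ P * (N ^ p) ^ (q - 1)) :
    min α (1 / 3) ^ k * N ^ (p + q) ≤ P := by
  obtain ⟨r, rfl⟩ := Nat.exists_eq_add_one_of_ne_zero hq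
  have hβ₀ : 0 ≤ min α (1 / 3) := le_min hα (by norm_num)
  have hcoef : min α (1 / 3) ^ k ≤ α ^ (r + 1) * (1 / 3) ^ (p * (r + 1)) :=
    calc min α (1 / 3) ^ k ≤ min α (1 / 3) ^ ((r + 1) * (p + 1)) :=
          pow_le_pow_of_le_one hβ₀ ((min_le_right _ _).trans (by norm_num)) hk
      _ = min α (1 / 3) ^ (r + 1) * min α (1 / 3) ^ (p * (r + 1)) := by ring
      _ ≤ α ^ (r + 1) * (1 / 3) ^ (p * (r + 1)) := by
          gcongr
          exacts [min_le_left _ _, min_le_right _ _]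
  have hexpand : (α * N) ^ (r + 1) * (N / 3) ^ (p * (r + 1)) =
      α ^ (r + 1) * (1 / 3) ^ (p * (r + 1)) * N ^ (p + (r + 1)) * (N ^ p) ^ r := by ring
  rw [Nat.add_sub_cancel, hexpand] at hP
  refine le_of_mul_le_mul_right (le_trans ?_ hP) (by positivity)
  gcongr

lemma min_mul_pow_le_of_count_bounds {c₀ ε X : ℝ} {m d n h : ℕ} (hc₀ : 0 < c₀) (hh : 3 ≤ h)
    (hn : 0 < n) (hε : 0 < ε) (hm : ε * n ^ 2 ≤ m) (hmd : m ≤ d) (hX₁ : (m : ℝ) ≤ X)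
    (hX₂ : d * (c₀ * n ^ (h - 2) - h ^ 2 * n ^ (h - 3)) ≤ X) :
    min (c₀ / 2) ((c₀ / (2 * h ^ 2)) ^ h) * ε * n ^ h ≤ X := by
  have hn₁ : (1 : ℝ) ≤ n := by exact_mod_cast hn
  have hh₀ : (0 : ℝ) < h := by exact_mod_cast (by omega : 0 < h)
  by_cases hbig : 2 * h ^ 2 / c₀ ≤ (n : ℝ)
  · have hlow : (h : ℝ) ^ 2 * n ^ (h - 3) ≤ c₀ / 2 * n ^ (h - 2) := by
      have : (h : ℝ) ^ 2 ≤ c₀ / 2 * n := by rw [div_le_iff₀ hc₀] at hbig; linarith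
      calc (h : ℝ) ^ 2 * n ^ (h - 3) ≤ c₀ / 2 * n * n ^ (h - 3) := by gcongr
        _ = c₀ / 2 * n ^ (h - 2) := by rw [show h - 2 = h - 3 + 1 by omega, pow_succ]; ring
    calc min (c₀ / 2) ((c₀ / (2 * h ^ 2)) ^ h) * ε * n ^ h ≤ c₀ / 2 * ε * n ^ h := by
          gcongr
          exact min_le_left _ _
      _ = ε * n ^ 2 * (c₀ / 2 * n ^ (h - 2)) := by
          rw [show h = 2 + (h - 2) by omega, pow_add]
          simp only [Nat.add_sub_cancel_left]
          ring
      _ ≤ m * (c₀ * n ^ (h - 2) - h ^ 2 * n ^ (h - 3)) := by gcongr; linarith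
      _ ≤ d * (c₀ * n ^ (h - 2) - h ^ 2 * n ^ (h - 3)) := by
          have : 0 ≤ c₀ / 2 * (n : ℝ) ^ (h - 2) := by positivity
          gcongr
          linarith
      _ ≤ X := hX₂
  · have hsmall : (c₀ / (2 * h ^ 2) * n) ^ h ≤ 1 := by
      refine pow_le_one₀ (by positivity) ?_
      rw [div_mul_eq_mul_div, div_le_one (by positivity)]
      rw [not_le, lt_div_iff₀ hc₀] at hbig
      linarith
    calc min (c₀ / 2) ((c₀ / (2 * h ^ 2)) ^ h) * ε * n ^ h
          ≤ (c₀ / (2 * h ^ 2)) ^ h * ε * n ^ h := by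
          gcongr
          exact min_le_right _ _
      _ = ε * (c₀ / (2 * h ^ 2) * n) ^ h := by ring
      _ ≤ ε * n ^ 2 := by nlinarith [one_le_pow₀ (n := 2) hn₁]
      _ ≤ X := hm.trans hX₁

open scoped Classical

section CriticalEdge

variable {ι : Type} {H : SimpleGraph ι} {x y : ι}

lemma SimpleGraph.Coloring.color_ne_of_adj (c : (H.deleteEdges {s(x, y)}).Coloring (Fin 2))
    {u v : ι} (huv : H.Adj u v) (hne : s(u, v) ≠ s(x, y)) : c u ≠ c v :=
  c.valid ((deleteEdges_adj ..).mpr ⟨huv, by simpa using hne⟩)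

lemma exists_adj_adj_of_hasCopy_cycleGraph_three (c : (H.deleteEdges {s(x, y)}).Coloring (Fin 2))
    (htri : HasCopy (cycleGraph 3) H) : ∃ z, H.Adj x z ∧ H.Adj y z := by
  obtain ⟨t, -⟩ := htri
  have tadj : ∀ i j, i ≠ j → H.Adj (t i) (t j) := fun i j hij =>
    t.map_adj (by rwa [cycleGraph_three_eq_top, top_adj])
  -- two corners of the triangle share a colour, so they span the uncoloured edge `xy`
  obtain ⟨i, j, hij, hcol⟩ := Fintype.exists_ne_map_eq_of_card_lt (c ∘ t) (by simp)
  obtain ⟨k, hki, hkj⟩ : ∃ k, k ≠ i ∧ k ≠ j := (by decide : ∀ i j : Fin 3, ∃ k, k ≠ i ∧ k ≠ j) i j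
  have hedge : s(t i, t j) = s(x, y) := by
    by_contra hne
    exact c.color_ne_of_adj (tadj i j hij) hne hcol
  rcases Sym2.eq_iff.mp hedge with ⟨hx, hy⟩ | ⟨hy, hx⟩
  · exact ⟨t k, hx ▸ tadj i k hki.symm, hy ▸ tadj j k hkj.symm⟩
  · exact ⟨t k, hx ▸ tadj j k hkj.symm, hy ▸ tadj i k hki.symm⟩

lemma SimpleGraph.Coloring.color_eq_and_ne_of_adj_adj
    (c : (H.deleteEdges {s(x, y)}).Coloring (Fin 2)) {z : ι} (hxz : H.Adj x z)
    (hyz : H.Adj y z) : c x = c y ∧ c z ≠ c x := by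
  have hcxz := c.color_ne_of_adj hxz (by simp [hxz.ne', hyz.ne'])
  have hcyz := c.color_ne_of_adj hyz (by simp [hxz.ne', hyz.ne'])
  have key : ∀ p q r : Fin 2, p ≠ r → q ≠ r → p = q ∧ r ≠ p := by decide
  exact key _ _ _ hcxz hcyz

end CriticalEdge

lemma mem_copyEdges {ι V : Type} {H : SimpleGraph ι} {f : ι → V} {u v : ι} (huv : H.Adj u v) :
    s(f u, f v) ∈ copyEdges H f :=
  ⟨s(u, v), huv, rfl⟩

section HostGraph

variable {ι V : Type} [Fintype V] {H : SimpleGraph ι} {G : SimpleGraph V}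

lemma exists_codegree_ge {α : ℝ} (hdeg : ∀ v, (1 / 3 + α) * Fintype.card V ≤ G.degree v)
    (u v w : V) :
    α * Fintype.card V ≤ #(G.neighborFinset u ∩ G.neighborFinset v) ∨
      α * Fintype.card V ≤ #(G.neighborFinset u ∩ G.neighborFinset w) ∨
      α * Fintype.card V ≤ #(G.neighborFinset v ∩ G.neighborFinset w) := by
  have h := card_add_card_add_card_le (G.neighborFinset u) (G.neighborFinset v) (G.neighborFinset w)
  simp only [card_neighborFinset_eq_degree] at h
  have hR : (G.degree u + G.degree v + G.degree w : ℝ) ≤ Fintype.card V +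
      (#(G.neighborFinset u ∩ G.neighborFinset v) + #(G.neighborFinset u ∩ G.neighborFinset w) +
        #(G.neighborFinset v ∩ G.neighborFinset w) : ℝ) := by exact_mod_cast h
  by_contra! hlt
  linarith [hdeg u, hdeg v, hdeg w, hlt.1, hlt.2.1, hlt.2.2]

noncomputable def highCodegreePairs (G : SimpleGraph V) (α : ℝ) : Finset (V × V) :=
  {p | G.Adj p.1 p.2 ∧ α * Fintype.card V ≤ #(G.neighborFinset p.1 ∩ G.neighborFinset p.2)}

lemma le_copyCount_of_hasEdgeDisjointCopies [Fintype ι] {m : ℕ} {x y : ι} (hxy : H.Adj x y)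
    (hcopies : HasEdgeDisjointCopies H G m) : m ≤ _root_.copyCount H G := by
  obtain ⟨f, hinj, hdisj⟩ := hcopies
  have hf : Function.Injective fun i => (⟨f i, hinj i⟩ : {φ : H →g G // Function.Injective φ}) := by
    intro i j hij
    by_contra hne
    have hfij : f i = f j := congrArg Subtype.val hij
    exact Set.disjoint_left.mp (hdisj hne) (mem_copyEdges (f := f i) hxy)
      (hfij ▸ mem_copyEdges (f := f i) hxy)
  simpa [_root_.copyCount] using Nat.card_le_card_of_injective _ hf

lemma card_le_card_highCodegreePairs {m : ℕ} {α : ℝ} {x y z : ι} (hxy : H.Adj x y)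
    (hxz : H.Adj x z) (hyz : H.Adj y z)
    (hdeg : ∀ v, (1 / 3 + α) * Fintype.card V ≤ G.degree v)
    (hcopies : HasEdgeDisjointCopies H G m) : m ≤ #(highCodegreePairs G α) := by
  obtain ⟨f, -, hdisj⟩ := hcopies
  have hpair : ∀ i, ∃ p ∈ highCodegreePairs G α, s(p.1, p.2) ∈ copyEdges H (f i) := by
    intro i
    rcases exists_codegree_ge hdeg (f i x) (f i y) (f i z) with h | h | h
    · exact ⟨(f i x, f i y), by simp [highCodegreePairs, (f i).map_adj hxy, h], mem_copyEdges hxy⟩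
    · exact ⟨(f i x, f i z), by simp [highCodegreePairs, (f i).map_adj hxz, h], mem_copyEdges hxz⟩
    · exact ⟨(f i y, f i z), by simp [highCodegreePairs, (f i).map_adj hyz, h], mem_copyEdges hyz⟩
  choose p hpD hpE using hpair
  have hp : Set.InjOn p (univ : Finset (Fin m)) := by
    intro i _ j _ hij
    by_contra hne
    exact Set.disjoint_left.mp (hdisj hne) (hpE i) (hij ▸ hpE j)
  simpa using card_le_card_of_injOn p (fun i _ => hpD i) hp

end HostGraph

section NonInjective

variable {ι V : Type} [Fintype ι] [Fintype V]

lemma card_filter_pinned_eq_le {x y u v : ι} {a b : V} (hxy : x ≠ y) (hux : u ≠ x) (huy : u ≠ y)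
    (huv : u ≠ v) :
    #{g : ι → V | g x = a ∧ g y = b ∧ g u = g v} ≤ Fintype.card V ^ (Fintype.card ι - 3) := by
  set K : Finset ι := {x, y, u}ᶜ
  have hcard : Fintype.card (K → V) = Fintype.card V ^ (Fintype.card ι - 3) := by
    rw [Fintype.card_fun, Fintype.card_coe, card_compl,
      card_insert_of_notMem (by simp [hxy, hux.symm]), card_pair huy.symm]
  rw [← hcard, ← card_univ]
  refine card_le_card_of_injOn (fun g w => g w.1) (by simp) fun g₁ hg₁ g₂ hg₂ he => ?_
  simp only [mem_coe, mem_filter, mem_univ, true_and] at hg₁ hg₂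
  have hoff : ∀ w, w ≠ u → g₁ w = g₂ w := by
    intro w hwu
    by_cases hwx : w = x
    · rw [hwx, hg₁.1, hg₂.1]
    by_cases hwy : w = y
    · rw [hwy, hg₁.2.1, hg₂.2.1]
    exact congrFun he ⟨w, by simp [K, hwx, hwy, hwu]⟩
  funext w
  by_cases hwu : w = u
  · rw [hwu, hg₁.2.2, hg₂.2.2, hoff v huv.symm]
  · exact hoff w hwu

lemma card_filter_pinned_not_injective_le {x y : ι} {a b : V} (hxy : x ≠ y) (hab : a ≠ b) :
    #{g : ι → V | g x = a ∧ g y = b ∧ ¬Function.Injective g} ≤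
      Fintype.card ι ^ 2 * Fintype.card V ^ (Fintype.card ι - 3) := by
  set P : Finset (ι × ι) := {uv | uv.1 ≠ uv.2 ∧ uv.1 ≠ x ∧ uv.1 ≠ y}
  have hsub : ({g | g x = a ∧ g y = b ∧ ¬Function.Injective g} : Finset (ι → V)) ⊆
      P.biUnion fun uv => {g : ι → V | g x = a ∧ g y = b ∧ g uv.1 = g uv.2} := by
    intro g hg
    simp only [mem_filter, mem_univ, true_and, Function.not_injective_iff] at hg
    obtain ⟨hga, hgb, u, v, hguv, huv⟩ := hg
    simp only [mem_biUnion, mem_filter, mem_univ, true_and, P]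
    by_cases hu : u ≠ x ∧ u ≠ y
    · exact ⟨(u, v), ⟨huv, hu⟩, hga, hgb, hguv⟩
    by_cases hv : v ≠ x ∧ v ≠ y
    · exact ⟨(v, u), ⟨huv.symm, hv⟩, hga, hgb, hguv.symm⟩
    exfalso
    have hu' : u = x ∨ u = y := by tauto
    have hv' : v = x ∨ v = y := by tauto
    rcases hu' with rfl | rfl <;> rcases hv' with rfl | rfl
    all_goals first
      | exact huv rfl
      | exact hab (hga ▸ hgb ▸ hguv)
      | exact hab (hga ▸ hgb ▸ hguv.symm)
  calc _ ≤ _ := card_le_card hsub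
    _ ≤ _ := card_biUnion_le
    _ ≤ #P * Fintype.card V ^ (Fintype.card ι - 3) := by
      refine sum_le_card_nsmul _ _ _ fun uv huv => ?_
      simp only [mem_filter, mem_univ, true_and, P] at huv
      exact card_filter_pinned_eq_le hxy huv.2.1 huv.2.2 huv.1
    _ ≤ _ := by
      gcongr
      simpa [sq] using card_le_univ P

end NonInjective

section PinnedHoms

variable {ι V : Type} [Fintype ι] [Fintype V] {H : SimpleGraph ι} {G : SimpleGraph V}

noncomputable def pinnedHoms (H : SimpleGraph ι) (G : SimpleGraph V) (x y : ι) (a b : V) :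
    Finset (ι → V) :=
  {g | g x = a ∧ g y = b ∧ ∀ u v, H.Adj u v → G.Adj (g u) (g v)}

lemma copyCount_eq_card_s12 :
    _root_.copyCount H G =
      #{g : ι → V | Function.Injective g ∧ ∀ u v, H.Adj u v → G.Adj (g u) (g v)} := by
  rw [_root_.copyCount, ← Nat.card_eq_finsetCard]
  exact Nat.card_congr
    { toFun := fun φ => ⟨φ.1, by simpa using ⟨φ.2, fun u v huv => φ.1.map_adj huv⟩⟩
      invFun := fun g => ⟨⟨g.1, fun huv => ((mem_filter.mp g.2).2.2 _ _ huv)⟩,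
        (mem_filter.mp g.2).2.1⟩
      left_inv := fun _ => rfl
      right_inv := fun _ => rfl }

lemma sum_card_filter_injective_pinnedHoms_le_copyCount (x y : ι) (D : Finset (V × V)) :
    ∑ p ∈ D, #((pinnedHoms H G x y p.1 p.2).filter Function.Injective) ≤ _root_.copyCount H G := by
  rw [← card_biUnion]
  · rw [copyCount_eq_card_s12]
    refine card_le_card fun g hg => ?_
    obtain ⟨p, -, hg⟩ := mem_biUnion.mp hg
    simp only [pinnedHoms, mem_filter, mem_univ, true_and] at hg ⊢
    exact ⟨hg.2, hg.1.2.2⟩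
  · intro p _ q _ hpq
    refine disjoint_left.mpr fun g hgp hgq => hpq ?_
    simp only [pinnedHoms, mem_filter, mem_univ, true_and] at hgp hgq
    exact Prod.ext (hgp.1.1.symm.trans hgq.1.1) (hgp.1.2.1.symm.trans hgq.1.2.1)

lemma card_bipartite_maps_le_card_pinnedHoms {x y : ι} {a b : V} (hxy : H.Adj x y)
    (c : (H.deleteEdges {s(x, y)}).Coloring (Fin 2)) (hcxy : c x = c y) (hab : G.Adj a b) :
    #{φψ : ({w // c w = c x ∧ w ≠ x ∧ w ≠ y} → V) × ({w // c w ≠ c x} → V) |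
        ∀ q, φψ.2 q ∈ G.neighborFinset a ∩ G.neighborFinset b ∧ ∀ p, G.Adj (φψ.1 p) (φψ.2 q)} ≤
      #(pinnedHoms H G x y a b) := by
  let glue : ({w // c w = c x ∧ w ≠ x ∧ w ≠ y} → V) × ({w // c w ≠ c x} → V) → ι → V :=
    fun φψ w => if hp : c w = c x ∧ w ≠ x ∧ w ≠ y then φψ.1 ⟨w, hp⟩
      else if hq : c w ≠ c x then φψ.2 ⟨w, hq⟩ else if w = x then a else b
  have glue_x : ∀ φψ, glue φψ x = a := by simp [glue]
  have glue_y : ∀ φψ, glue φψ y = b := by simp [glue, hcxy, hxy.ne']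
  have glue_p : ∀ φψ w (hp : c w = c x ∧ w ≠ x ∧ w ≠ y), glue φψ w = φψ.1 ⟨w, hp⟩ := by
    intro φψ w hp
    simp [glue, hp]
  have glue_q : ∀ φψ w (hq : c w ≠ c x), glue φψ w = φψ.2 ⟨w, hq⟩ := by
    intro φψ w hq
    simp [glue, hq]
  refine card_le_card_of_injOn glue (fun φψ hφψ => ?_) (fun φψ _ φψ' _ he => ?_)
  · simp only [mem_coe, mem_filter, mem_univ, true_and] at hφψ
    simp only [pinnedHoms, mem_coe, mem_filter, mem_univ, true_and]
    refine ⟨glue_x φψ, glue_y φψ, ?_⟩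
    have key : ∀ u v, H.Adj u v → c u = c x → c v ≠ c x → G.Adj (glue φψ u) (glue φψ v) := by
      intro u v huv hu hv
      obtain ⟨hN, hadj⟩ := hφψ ⟨v, hv⟩
      rw [mem_inter, mem_neighborFinset, mem_neighborFinset] at hN
      rw [glue_q φψ v hv]
      by_cases hux : u = x
      · rw [hux, glue_x]; exact hN.1
      by_cases huy : u = y
      · rw [huy, glue_y]; exact hN.2
      rw [glue_p φψ u ⟨hu, hux, huy⟩]
      exact hadj _
    intro u v huv
    -- every edge of `H` other than `xy` has exactly one end in the colour class of `x`
    by_cases he : s(u, v) = s(x, y)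
    · rcases Sym2.eq_iff.mp he with ⟨rfl, rfl⟩ | ⟨rfl, rfl⟩
      · rw [glue_x, glue_y]; exact hab
      · rw [glue_x, glue_y]; exact hab.symm
    have hne := c.color_ne_of_adj huv he
    by_cases hu : c u = c x
    · exact key u v huv hu fun hv => hne (hu.trans hv.symm)
    · have hv : c v = c x := (by decide : ∀ p q r : Fin 2, p ≠ q → p ≠ r → q = r) _ _ _ hne hu
      exact (key v u huv.symm hv hu).symm
  · refine Prod.ext (funext fun p => ?_) (funext fun q => ?_)
    · simpa [glue_p _ _ p.2] using congrFun he p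
    · simpa [glue_q _ _ q.2] using congrFun he q

lemma card_pinnedHoms_le {x y : ι} {a b : V} (hxy : H.Adj x y) (hab : G.Adj a b) :
    #(pinnedHoms H G x y a b) ≤ #((pinnedHoms H G x y a b).filter Function.Injective) +
      Fintype.card ι ^ 2 * Fintype.card V ^ (Fintype.card ι - 3) := by
  rw [← card_filter_add_card_filter_not (s := pinnedHoms H G x y a b) Function.Injective]
  gcongr
  refine le_trans (card_le_card fun g hg => ?_) (card_filter_pinned_not_injective_le hxy.ne hab.ne)
  simp only [pinnedHoms, mem_filter, mem_univ, true_and] at hg ⊢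
  exact ⟨hg.1.1, hg.1.2.1, hg.2⟩

lemma card_color_classes {x y : ι} (hxy : x ≠ y) (c : ι → Fin 2) (hcxy : c x = c y) :
    Fintype.card {w // c w = c x ∧ w ≠ x ∧ w ≠ y} + Fintype.card {w // c w ≠ c x} + 2 =
      Fintype.card ι := by
  have hA : univ.filter (fun w => c w = c x ∧ w ≠ x ∧ w ≠ y) =
      univ.filter (fun w => c w = c x) \ {x, y} := by
    ext w
    simp only [mem_filter, mem_univ, true_and, mem_sdiff, mem_insert, mem_singleton]
    tauto
  have hxy_sub : {x, y} ⊆ univ.filter (fun w => c w = c x) := by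
    simp [insert_subset_iff, hcxy]
  have hsplit := card_filter_add_card_filter_not (s := univ) (fun w => c w = c x)
  have hle := card_le_card hxy_sub
  rw [Fintype.card_subtype, Fintype.card_subtype, hA, card_sdiff_of_subset hxy_sub]
  simp only [card_univ, card_pair hxy, ne_eq] at hsplit hle ⊢
  omega

lemma min_pow_mul_pow_le_card_injective_pinnedHoms {x y z : ι} {a b : V} {α : ℝ} (hα : 0 ≤ α)
    (hxy : H.Adj x y) (c : (H.deleteEdges {s(x, y)}).Coloring (Fin 2)) (hcxy : c x = c y)
    (hcz : c z ≠ c x) (hdeg : ∀ v, (Fintype.card V : ℝ) / 3 ≤ G.degree v) (hab : G.Adj a b)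
    (hcodeg : α * Fintype.card V ≤ #(G.neighborFinset a ∩ G.neighborFinset b)) :
    min α (1 / 3) ^ (Fintype.card ι * Fintype.card ι) * Fintype.card V ^ (Fintype.card ι - 2) ≤
      #((pinnedHoms H G x y a b).filter Function.Injective) +
        Fintype.card ι ^ 2 * Fintype.card V ^ (Fintype.card ι - 3) := by
  have hN : (0 : ℝ) < Fintype.card V := by exact_mod_cast Fintype.card_pos_iff.mpr ⟨a⟩
  have hclasses := card_color_classes hxy.ne c hcxy
  have : Nonempty {w // c w ≠ c x} := ⟨⟨z, hcz⟩⟩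
  have hbip := pow_mul_pow_le_card_bipartite_maps (A := {w // c w = c x ∧ w ≠ x ∧ w ≠ y})
    (B := {w // c w ≠ c x}) (d := Fintype.card V / 3) G.Adj
    (G.neighborFinset a ∩ G.neighborFinset b) (by positivity) hcodeg (by positivity) fun w _ => by
      simpa [← card_neighborFinset_eq_degree, neighborFinset_eq_filter, G.adj_comm] using hdeg w
  have hpinned := min_pow_mul_pow_le_of_bipartite_bound hα hN Fintype.card_ne_zero
    (p := Fintype.card {w // c w = c x ∧ w ≠ x ∧ w ≠ y}) (q := Fintype.card {w // c w ≠ c x})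
    (k := Fintype.card ι * Fintype.card ι) (Nat.mul_le_mul (by omega) (by omega))
    (P := #(pinnedHoms H G x y a b))
    (hbip.trans (by gcongr; exact card_bipartite_maps_le_card_pinnedHoms hxy c hcxy hab))
  rw [show Fintype.card ι - 2 = Fintype.card {w // c w = c x ∧ w ≠ x ∧ w ≠ y} +
    Fintype.card {w // c w ≠ c x} by omega]
  calc _ ≤ (#(pinnedHoms H G x y a b) : ℝ) := hpinned
    _ ≤ _ := by exact_mod_cast card_pinnedHoms_le hxy hab

lemma card_highCodegreePairs_mul_le_copyCount {x y z : ι} {α : ℝ} (hα : 0 ≤ α) (hxy : H.Adj x y)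
    (c : (H.deleteEdges {s(x, y)}).Coloring (Fin 2)) (hcxy : c x = c y) (hcz : c z ≠ c x)
    (hdeg : ∀ v, (Fintype.card V : ℝ) / 3 ≤ G.degree v) :
    #(highCodegreePairs G α) * (min α (1 / 3) ^ (Fintype.card ι * Fintype.card ι) *
        Fintype.card V ^ (Fintype.card ι - 2) -
        Fintype.card ι ^ 2 * Fintype.card V ^ (Fintype.card ι - 3)) ≤ _root_.copyCount H G := by
  calc _ ≤ ∑ p ∈ highCodegreePairs G α,
        (#((pinnedHoms H G x y p.1 p.2).filter Function.Injective) : ℝ) := by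
        rw [← nsmul_eq_mul]
        refine card_nsmul_le_sum _ _ _ fun p hp => ?_
        simp only [highCodegreePairs, mem_filter, mem_univ, true_and] at hp
        linarith [min_pow_mul_pow_le_card_injective_pinnedHoms hα hxy c hcxy hcz hdeg hp.1 hp.2]
    _ ≤ _ := by
        exact_mod_cast sum_card_filter_injective_pinnedHoms_le_copyCount (H := H) (G := G) x y
          (highCodegreePairs G α)

end PinnedHoms

theorem stmt_12 (h : ℕ) (H : SimpleGraph (Fin h)) (hχ : H.chromaticNumber = 3)
    (hcrit : ∃ x y : Fin h, H.Adj x y ∧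
      (H.deleteEdges {s(x, y)}).chromaticNumber < H.chromaticNumber)
    (htri : HasCopy (cycleGraph 3) H)
    (α : ℝ) (hα : 0 < α) :
    ∃ μ : ℝ, 0 < μ ∧
      ∀ ε : ℝ, 0 < ε → ∀ n : ℕ, 0 < n → ∀ G : SimpleGraph (Fin n),
        (∀ v, (1 / 3 + α) * n ≤ (Nat.card (G.neighborSet v) : ℝ)) →
        (∃ m : ℕ, ε * n ^ 2 ≤ (m : ℝ) ∧ HasEdgeDisjointCopies H G m) →
        μ * ε * (n : ℝ) ^ h ≤ (_root_.copyCount H G : ℝ) := by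
  obtain ⟨x, y, hxy, hlt⟩ := hcrit
  rw [hχ] at hlt
  obtain ⟨c⟩ : (H.deleteEdges {s(x, y)}).Colorable 2 :=
    chromaticNumber_le_iff_colorable.mp (Order.le_of_lt_add_one hlt)
  obtain ⟨z, hxz, hyz⟩ := exists_adj_adj_of_hasCopy_cycleGraph_three c htri
  obtain ⟨hcxy, hcz⟩ := c.color_eq_and_ne_of_adj_adj hxz hyz
  have hh : 3 ≤ h := by
    simpa [card_insert_of_notMem, hxy.ne, hxz.ne, hyz.ne] using card_le_univ {x, y, z}
  set c₀ := min α (1 / 3) ^ (h * h)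
  have hc₀ : 0 < c₀ := by positivity
  refine ⟨min (c₀ / 2) ((c₀ / (2 * h ^ 2)) ^ h), by positivity,
    fun ε hε n hn G hdeg ⟨m, hm, hcopies⟩ => ?_⟩
  have hdeg' : ∀ v, (1 / 3 + α) * Fintype.card (Fin n) ≤ G.degree v := fun v => by
    simpa only [Nat.card_eq_fintype_card, card_neighborSet_eq_degree, Fintype.card_fin] using hdeg v
  have hdeg₃ : ∀ v, (Fintype.card (Fin n) : ℝ) / 3 ≤ G.degree v := fun v => by
    linarith [hdeg' v, mul_nonneg hα.le (Fintype.card (Fin n)).cast_nonneg]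
  have hpairs := card_highCodegreePairs_mul_le_copyCount hα.le hxy c hcxy hcz hdeg₃
  simp only [Fintype.card_fin] at hpairs
  exact min_mul_pow_le_of_count_bounds hc₀ hh hn hε hm
    (card_le_card_highCodegreePairs hxy hxz hyz hdeg' hcopies)
    (by exact_mod_cast le_copyCount_of_hasEdgeDisjointCopies hxy hcopies) hpairs
end

section
/- Let k ≥ 2 be an integer and let G be an n-vertex graph with minimum degree δ(G) > (2/(2k+1))·n that contains no odd cycle of length less than 2k+1 (i.e., its odd girth is at least 2k+1). Then G is bipartite. -/
/-!
Take a shortest odd closed walk `C`, of length `ℓ`. Its vertices are distinct (a repeated vertex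
would split it into two shorter closed walks, one of them odd), so it is an odd cycle and the odd
girth hypothesis gives `ℓ ≥ 2k + 1 ≥ 5`. By minimality, a vertex adjacent to two vertices of `C`
sees them at distance exactly `2` along `C`, so every vertex has at most two neighbours on `C`.
Double counting the edges between `C` and `G` then gives `ℓ · δ ≤ 2n`, whereas
`ℓ · δ > (2k + 1) · 2n / (2k + 1) = 2n`.
-/

open SimpleGraph

open Finset

namespace SimpleGraph

variable {V : Type*} {G : SimpleGraph V}

lemma hasCopy_of_isContained {α β : Type} {A : SimpleGraph α} {B : SimpleGraph β}
    (h : A ⊑ B) : HasCopy A B :=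
  let ⟨f⟩ := h; ⟨f.toHom, f.injective⟩

lemma sum_degree_le_of_card_adj_le [Fintype V] [DecidableRel G.Adj] {ι : Type*} (s : Finset ι)
    (f : ι → V) (c : ℕ) (h : ∀ u, #{i ∈ s | G.Adj u (f i)} ≤ c) :
    ∑ i ∈ s, G.degree (f i) ≤ c * Fintype.card V := by
  calc ∑ i ∈ s, G.degree (f i)
      = ∑ i ∈ s, #(univ.bipartiteAbove (fun i u => G.Adj (f i) u) i) := by
        simp [bipartiteAbove, ← card_neighborFinset_eq_degree, neighborFinset_eq_filter]
    _ = ∑ u, #(s.bipartiteBelow (fun i u => G.Adj (f i) u) u) :=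
        sum_card_bipartiteAbove_eq_sum_card_bipartiteBelow _
    _ ≤ ∑ _u : V, c := sum_le_sum fun u _ => by
        simpa [bipartiteBelow, G.adj_comm] using h u
    _ = c * Fintype.card V := by simp [mul_comm]

namespace Walk

lemma exists_split_getVert {u : V} (w : G.Walk u u) {i j : ℕ} (hij : i ≤ j)
    (hj : j ≤ w.length) : ∃ (s : G.Walk (w.getVert i) (w.getVert j))
      (t : G.Walk (w.getVert j) (w.getVert i)), s.length = j - i ∧ s.length + t.length = w.length :=
  ⟨((w.take j).drop i).copy (by simp [hij]) rfl, (w.drop j).append (w.take i),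
    by simp [hj], by simp only [length_copy, drop_length, take_length, length_append]; omega⟩

def IsShortestOddClosed {u : V} (w : G.Walk u u) : Prop :=
  Odd w.length ∧ ∀ (v : V) (q : G.Walk v v), Odd q.length → w.length ≤ q.length

namespace IsShortestOddClosed

variable {u : V} {w : G.Walk u u}

lemma odd_and_le_or_odd_and_le (hw : w.IsShortestOddClosed) {a b : V} (s : G.Walk a b)
    (t : G.Walk b a) (hst : s.length + t.length = w.length) (r : G.Walk b a) :
    Odd (s.length + r.length) ∧ w.length ≤ s.length + r.length ∨
      Odd (t.length + r.length) ∧ w.length ≤ t.length + r.length := by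
  rcases Nat.even_or_odd (s.length + r.length) with hs | hs
  · have ht : Odd (t.length + r.length) := by
      have hodd := Nat.odd_iff.1 hw.1
      rw [Nat.even_iff] at hs
      rw [Nat.odd_iff]
      omega
    exact Or.inr ⟨ht, by simpa using hw.2 _ (t.append r.reverse) (by simpa using ht)⟩
  · exact Or.inl ⟨hs, by simpa using hw.2 _ (s.append r) (by simpa using hs)⟩

lemma getVert_ne (hw : w.IsShortestOddClosed) {i j : ℕ} (hij : i < j) (hj : j ≤ w.length)
    (hji : j - i < w.length) : w.getVert i ≠ w.getVert j := by
  intro heq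
  obtain ⟨s, t, hs, hst⟩ := w.exists_split_getVert hij.le hj
  rcases hw.odd_and_le_or_odd_and_le s t hst (Walk.nil.copy rfl heq.symm) with h | h <;>
    simp only [length_copy, length_nil, add_zero] at h <;> omega

lemma three_le_length (hw : w.IsShortestOddClosed) : 3 ≤ w.length := by
  have hodd := hw.1
  suffices w.length ≠ 1 by rw [Nat.odd_iff] at hodd; omega
  intro h1
  have hadj := w.adj_getVert_succ (i := 0) (by omega)
  rw [zero_add, ← h1, getVert_zero, getVert_length] at hadj
  exact G.irrefl hadj

lemma isCycle (hw : w.IsShortestOddClosed) : w.IsCycle := by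
  refine isCycle_iff_isPath_tail_and_le_length.2 ⟨(IsPath.getVert_injOn_iff _).1 ?_,
    hw.three_le_length⟩
  intro i hi j hj hij
  simp only [length_tail, Set.mem_ofPred_eq, getVert_tail] at hi hj hij
  by_contra hne
  rcases Nat.lt_or_gt_of_ne hne with h | h
  · exact hw.getVert_ne (by omega) (by omega) (by omega) hij
  · exact hw.getVert_ne (by omega) (by omega) (by omega) hij.symm

lemma sub_eq_two_or_of_adj (hw : w.IsShortestOddClosed) {v : V} {i j : ℕ} (hij : i < j)
    (hj : j < w.length) (hvi : G.Adj v (w.getVert i)) (hvj : G.Adj v (w.getVert j)) :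
    j - i = 2 ∨ j - i = w.length - 2 := by
  obtain ⟨s, t, hs, hst⟩ := w.exists_split_getVert hij.le hj.le
  have hodd := hw.1
  rw [Nat.odd_iff] at hodd
  rcases hw.odd_and_le_or_odd_and_le s t hst (.cons hvj.symm (.cons hvi .nil)) with
    ⟨hpar, hle⟩ | ⟨hpar, hle⟩ <;> simp only [length_cons, length_nil, Nat.odd_iff] at hpar hle <;>
    omega

-- Three such positions would have their three gaps in `{2, ℓ - 2}`, which forces `ℓ = 6`.
lemma card_adj_getVert_le_two [DecidableRel G.Adj] (hw : w.IsShortestOddClosed)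
    (hlen : 5 ≤ w.length) (v : V) : #{i ∈ range w.length | G.Adj v (w.getVert i)} ≤ 2 := by
  by_contra! hcard
  obtain ⟨a, ha, b, hb, c, hc, hab, hac, hbc⟩ := two_lt_card.1 hcard
  simp only [mem_filter, mem_range] at ha hb hc
  have dab := fun h => hw.sub_eq_two_or_of_adj h hb.1 ha.2 hb.2
  have dba := fun h => hw.sub_eq_two_or_of_adj h ha.1 hb.2 ha.2
  have dac := fun h => hw.sub_eq_two_or_of_adj h hc.1 ha.2 hc.2
  have dca := fun h => hw.sub_eq_two_or_of_adj h ha.1 hc.2 ha.2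
  have dbc := fun h => hw.sub_eq_two_or_of_adj h hc.1 hb.2 hc.2
  have dcb := fun h => hw.sub_eq_two_or_of_adj h hb.1 hc.2 hb.2
  have hodd := Nat.odd_iff.1 hw.1
  omega

end IsShortestOddClosed

end Walk

lemma exists_isShortestOddClosed (h : ¬ G.Colorable 2) :
    ∃ (u : V) (w : G.Walk u u), w.IsShortestOddClosed := by
  classical
  simp only [two_colorable_iff_forall_loop_even, not_forall, Nat.not_even_iff_odd] at h
  have hex : ∃ m, ∃ (u : V) (w : G.Walk u u), Odd w.length ∧ w.length = m :=
    let ⟨u, w, hw⟩ := h; ⟨_, u, w, hw, rfl⟩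
  obtain ⟨u, w, hodd, hlen⟩ := Nat.find_spec hex
  exact ⟨u, w, hodd, fun v q hq => hlen ▸ Nat.find_min' hex ⟨v, q, hq, rfl⟩⟩

end SimpleGraph

theorem stmt_13 (k : ℕ) (hk : 2 ≤ k) (n : ℕ) (G : SimpleGraph (Fin n))
    (hδ : ∀ v, (2 / (2 * (k : ℝ) + 1)) * n < (Nat.card (G.neighborSet v) : ℝ))
    (hog : ∀ m : ℕ, 3 ≤ m → Odd m → m < 2 * k + 1 → ¬ HasCopy (cycleGraph m) G) :
    G.Colorable 2 := by
  classical
  by_contra hG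
  obtain ⟨u, w, hw⟩ := exists_isShortestOddClosed hG
  have hlen : 2 * k + 1 ≤ w.length := by
    by_contra! hlt
    refine hog _ hw.three_le_length hw.1 hlt (hasCopy_of_isContained ?_)
    exact (cycleGraph_isContained_iff hw.three_le_length).2 ⟨u, w, hw.isCycle, rfl⟩
  set c : ℝ := 2 / (2 * (k : ℝ) + 1) * n
  have hdeg : ∀ v, c < G.degree v := fun v => by
    rw [← card_neighborSet_eq_degree, ← Nat.card_eq_fintype_card]
    exact hδ v
  have hsum := sum_degree_le_of_card_adj_le (G := G) (range w.length) w.getVert 2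
    (hw.card_adj_getVert_le_two (by omega))
  rw [Fintype.card_fin] at hsum
  have := calc (2 * n : ℝ)
      = (2 * k + 1) * c := by simp only [c]; field_simp
    _ ≤ w.length * c := by gcongr; exact_mod_cast hlen
    _ = ∑ _i ∈ range w.length, c := by simp
    _ < ∑ i ∈ range w.length, (G.degree (w.getVert i) : ℝ) :=
        sum_lt_sum_of_nonempty (nonempty_range_iff.2 (by omega)) fun i _ => hdeg _
    _ ≤ 2 * n := by exact_mod_cast hsum
  exact lt_irrefl _ this
end

section
/- Let α > 0, let n be a positive integer, and let G be an n-vertex graph whose vertex set is partitioned into nonempty sets V₁, V₂, …, V₇ such that every edge of G joins V_i and V_{i+1} for some i ∈ {1,…,7} (indices modulo 7). Suppose the minimum degree satisfies δ(G) ≥ (1/4 + α/2)n. Then: (a) for every i ∈ {1,…,7}, any two vertices u, v that both lie in V_i, or that satisfy u ∈ V_i and v ∈ V_{i+2}, have at least αn common neighbors in G; and (b) for every i ∈ {1,…,7}, every vertex of V_i has at least αn neighbors in V_{i−1} and at least αn neighbors in V_{i+1}. -/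
/-!
Write `a j = |V_j|` and `d = (1/4 + α/2) n`. All neighbours of a vertex of `V_j` lie in
`V_{j-1} ∪ V_{j+1}`, so `a (j-1) + a (j+1) ≥ d` for every `j`. Since `∑ a j ≤ n`, covering the
indices outside a set `T` by disjoint pairs `{j-1, j+1}` bounds `∑_{j ∈ T} a j`: every part has size
at most `n - 3d`, and the neighbourhoods of two vertices as in (a) lie in parts of total size at
most `n - 2d`. Hence such vertices have at least `2d - (n - 2d) = 4d - n = 2αn` common neighbours,
and a vertex of `V_i` has at least `d - (n - 3d) = 4d - n` neighbours in each of `V_{i±1}`.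
-/

open SimpleGraph

open scoped Function

theorem Set.sum_ncard_le_natCard_of_pairwise_disjoint {α ι : Type*} [Finite α] [Fintype ι]
    {s : ι → Set α} (h : Pairwise (Disjoint on s)) : ∑ i, (s i).ncard ≤ Nat.card α := by
  rw [← finsum_eq_sum_of_fintype, ← Set.ncard_iUnion_of_finite (fun _ ↦ Set.toFinite _) h]
  exact Set.ncard_le_card _

theorem Set.ncard_add_ncard_le_ncard_inter_add {α : Type*} [Finite α] {A B S : Set α}
    (hA : A ⊆ S) (hB : B ⊆ S) : A.ncard + B.ncard ≤ (A ∩ B).ncard + S.ncard := by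
  rw [← Set.ncard_inter_add_ncard_union A B]
  exact Nat.add_le_add_left (Set.ncard_le_ncard (Set.union_subset hA hB)) _

theorem Set.ncard_le_ncard_inter_add {α : Type*} [Finite α] {A B C : Set α} (h : A ⊆ B ∪ C) :
    A.ncard ≤ (A ∩ B).ncard + C.ncard :=
  calc A.ncard ≤ ((A ∩ B) ∪ C).ncard :=
        Set.ncard_le_ncard fun x hx ↦ (h hx).imp (⟨hx, ·⟩) id
    _ ≤ (A ∩ B).ncard + C.ncard := Set.ncard_union_le _ _

theorem Fin.sum_univ_seven_add {M : Type*} [AddCommMonoid M] (a : Fin 7 → M) (i : Fin 7) :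
    ∑ j, a j = a i + a (i + 1) + a (i + 2) + a (i + 3) + a (i + 4) + a (i + 5) + a (i + 6) := by
  rw [← Equiv.sum_comp (Equiv.addLeft i) a, Fin.sum_univ_seven]
  simp

namespace SevenCycle

variable {a : Fin 7 → ℝ} {N d : ℝ}

theorem single_le_sub_three_mul (hsum : ∑ j, a j ≤ N) (hpair : ∀ j, d ≤ a (j - 1) + a (j + 1))
    (i : Fin 7) : a i ≤ N - 3 * d := by
  have h₀ := hpair i
  have h₃ := hpair (i + 3)
  have h₄ := hpair (i + 4)
  rw [show i - 1 = i + 6 by omega] at h₀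
  rw [show i + 3 - 1 = i + 2 by omega, show i + 3 + 1 = i + 4 by omega] at h₃
  rw [show i + 4 - 1 = i + 3 by omega, show i + 4 + 1 = i + 5 by omega] at h₄
  rw [Fin.sum_univ_seven_add a i] at hsum
  linarith

theorem three_consecutive_le_sub_two_mul (hsum : ∑ j, a j ≤ N)
    (hpair : ∀ j, d ≤ a (j - 1) + a (j + 1)) (i : Fin 7) :
    a (i - 1) + a i + a (i + 1) ≤ N - 2 * d := by
  have h₃ := hpair (i + 3)
  have h₄ := hpair (i + 4)
  rw [show i + 3 - 1 = i + 2 by omega, show i + 3 + 1 = i + 4 by omega] at h₃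
  rw [show i + 4 - 1 = i + 3 by omega, show i + 4 + 1 = i + 5 by omega] at h₄
  rw [Fin.sum_univ_seven_add a i, show i + 6 = i - 1 by omega] at hsum
  linarith

theorem three_alternate_le_sub_two_mul (hsum : ∑ j, a j ≤ N)
    (hpair : ∀ j, d ≤ a (j - 1) + a (j + 1)) (i : Fin 7) :
    a (i - 1) + a (i + 1) + a (i + 3) ≤ N - 2 * d := by
  have h₃ := hpair (i + 3)
  have h₆ := hpair (i + 6)
  rw [show i + 3 - 1 = i + 2 by omega, show i + 3 + 1 = i + 4 by omega] at h₃
  rw [show i + 6 - 1 = i + 5 by omega, show i + 6 + 1 = i by omega] at h₆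
  rw [Fin.sum_univ_seven_add a i, show i + 6 = i - 1 by omega] at hsum
  linarith

end SevenCycle

namespace SimpleGraph

def EdgesJoinConsecutive {V ι : Type*} [Add ι] [One ι] (G : SimpleGraph V) (P : ι → Set V) :
    Prop :=
  ∀ u v, G.Adj u v → ∃ i, (u ∈ P i ∧ v ∈ P (i + 1)) ∨ (v ∈ P i ∧ u ∈ P (i + 1))

variable {V ι : Type*} {G : SimpleGraph V}

theorem neighborSet_subset_union_of_edgesJoinConsecutive [AddGroup ι] [One ι] {P : ι → Set V}
    (hdisj : Pairwise (Disjoint on P)) (hedges : G.EdgesJoinConsecutive P) {v : V} {j : ι}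
    (hv : v ∈ P j) : G.neighborSet v ⊆ P (j - 1) ∪ P (j + 1) := by
  have part_eq {x : V} {i k : ι} (hi : x ∈ P i) (hk : x ∈ P k) : i = k := by
    by_contra hik
    exact Set.disjoint_left.mp (hdisj hik) hi hk
  intro w hw
  obtain ⟨i, ⟨hvi, hwi⟩ | ⟨hwi, hvi⟩⟩ := hedges v w hw
  · obtain rfl := part_eq hvi hv
    exact Or.inr hwi
  · obtain rfl := part_eq hvi hv
    rw [add_sub_cancel_right]
    exact Or.inl hwi

theorem le_ncard_add_ncard_of_edgesJoinConsecutive [Finite V] [AddGroup ι] [One ι]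
    {P : ι → Set V} {d : ℝ} (hne : ∀ i, (P i).Nonempty) (hdisj : Pairwise (Disjoint on P))
    (hedges : G.EdgesJoinConsecutive P) (hδ : ∀ v, d ≤ ((G.neighborSet v).ncard : ℝ)) (j : ι) :
    d ≤ ((P (j - 1)).ncard + (P (j + 1)).ncard : ℝ) := by
  obtain ⟨v, hv⟩ := hne j
  have hsub := neighborSet_subset_union_of_edgesJoinConsecutive hdisj hedges hv
  have : (G.neighborSet v).ncard ≤ (P (j - 1)).ncard + (P (j + 1)).ncard :=
    (Set.ncard_le_ncard hsub).trans (Set.ncard_union_le _ _)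
  exact (hδ v).trans (mod_cast this)

variable [Finite V] {P : Fin 7 → Set V} {d : ℝ}

theorem four_mul_sub_le_ncard_inter_neighborSet (hne : ∀ i, (P i).Nonempty)
    (hdisj : Pairwise (Disjoint on P)) (hedges : G.EdgesJoinConsecutive P)
    (hδ : ∀ v, d ≤ ((G.neighborSet v).ncard : ℝ)) {i : Fin 7} {u v : V}
    (huv : (u ∈ P i ∧ v ∈ P i) ∨ (u ∈ P i ∧ v ∈ P (i + 2))) :
    4 * d - Nat.card V ≤ ((G.neighborSet u ∩ G.neighborSet v).ncard : ℝ) := by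
  have hsum : ∑ j, ((P j).ncard : ℝ) ≤ Nat.card V :=
    mod_cast Set.sum_ncard_le_natCard_of_pairwise_disjoint hdisj
  have hpair := le_ncard_add_ncard_of_edgesJoinConsecutive hne hdisj hedges hδ
  have hN {j : Fin 7} {x : V} (hx : x ∈ P j) :=
    neighborSet_subset_union_of_edgesJoinConsecutive hdisj hedges hx
  have hcommon {S : Set V} (hu : G.neighborSet u ⊆ S) (hv : G.neighborSet v ⊆ S) :
      ((G.neighborSet u).ncard + (G.neighborSet v).ncard : ℝ)
        ≤ (G.neighborSet u ∩ G.neighborSet v).ncard + S.ncard :=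
    mod_cast Set.ncard_add_ncard_le_ncard_inter_add hu hv
  have hu := hδ u
  have hv := hδ v
  rcases huv with ⟨hui, hvi⟩ | ⟨hui, hvi⟩
  · have hS : ((P (i - 1) ∪ P (i + 1)).ncard : ℝ) ≤ (P (i - 1)).ncard + (P (i + 1)).ncard :=
      mod_cast Set.ncard_union_le _ _
    have := SevenCycle.three_consecutive_le_sub_two_mul hsum hpair i
    have : (0 : ℝ) ≤ (P i).ncard := Nat.cast_nonneg _
    linarith [hcommon (hN hui) (hN hvi)]
  · have hvi' : G.neighborSet v ⊆ P (i + 1) ∪ P (i + 3) := by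
      simpa only [show i + 2 - 1 = i + 1 by omega, show i + 2 + 1 = i + 3 by omega] using hN hvi
    have hS : ((P (i - 1) ∪ P (i + 1) ∪ P (i + 3)).ncard : ℝ)
        ≤ (P (i - 1)).ncard + (P (i + 1)).ncard + (P (i + 3)).ncard :=
      mod_cast (Set.ncard_union_le _ _).trans (Nat.add_le_add_right (Set.ncard_union_le _ _) _)
    have := SevenCycle.three_alternate_le_sub_two_mul hsum hpair i
    linarith [hcommon ((hN hui).trans Set.subset_union_left)
      (hvi'.trans (Set.union_subset_union_left _ Set.subset_union_right))]

theorem four_mul_sub_le_ncard_neighborSet_inter (hne : ∀ i, (P i).Nonempty)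
    (hdisj : Pairwise (Disjoint on P)) (hedges : G.EdgesJoinConsecutive P)
    (hδ : ∀ v, d ≤ ((G.neighborSet v).ncard : ℝ)) {i : Fin 7} {v : V} (hv : v ∈ P i) :
    4 * d - Nat.card V ≤ ((G.neighborSet v ∩ P (i - 1)).ncard : ℝ) ∧
      4 * d - Nat.card V ≤ ((G.neighborSet v ∩ P (i + 1)).ncard : ℝ) := by
  have hsum : ∑ j, ((P j).ncard : ℝ) ≤ Nat.card V :=
    mod_cast Set.sum_ncard_le_natCard_of_pairwise_disjoint hdisj
  have hpair := le_ncard_add_ncard_of_edgesJoinConsecutive hne hdisj hedges hδ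
  have hsmall := SevenCycle.single_le_sub_three_mul hsum hpair
  have hN := neighborSet_subset_union_of_edgesJoinConsecutive hdisj hedges hv
  have hpred : ((G.neighborSet v).ncard : ℝ)
      ≤ (G.neighborSet v ∩ P (i - 1)).ncard + (P (i + 1)).ncard :=
    mod_cast Set.ncard_le_ncard_inter_add hN
  have hsucc : ((G.neighborSet v).ncard : ℝ)
      ≤ (G.neighborSet v ∩ P (i + 1)).ncard + (P (i - 1)).ncard :=
    mod_cast Set.ncard_le_ncard_inter_add (Set.union_comm _ _ ▸ hN)
  have := hδ v
  constructor
  · linarith [hsmall (i + 1)]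
  · linarith [hsmall (i - 1)]

end SimpleGraph

theorem stmt_19_general (α : ℝ) (n : ℕ) (G : SimpleGraph (Fin n))
    (Vp : Fin 7 → Set (Fin n))
    (hne : ∀ i, (Vp i).Nonempty)
    (hdisj : Pairwise fun i j => Disjoint (Vp i) (Vp j))
    (hedges : ∀ u v : Fin n, G.Adj u v →
      ∃ i : Fin 7, (u ∈ Vp i ∧ v ∈ Vp (i + 1)) ∨ (v ∈ Vp i ∧ u ∈ Vp (i + 1)))
    (hδ : ∀ v, (1 / 4 + α / 2) * n ≤ (Nat.card (G.neighborSet v) : ℝ)) :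
    (∀ i : Fin 7, ∀ u v : Fin n, u ≠ v →
      ((u ∈ Vp i ∧ v ∈ Vp i) ∨ (u ∈ Vp i ∧ v ∈ Vp (i + 2))) →
      α * n ≤ (Nat.card ↥(G.neighborSet u ∩ G.neighborSet v) : ℝ)) ∧
    (∀ i : Fin 7, ∀ v ∈ Vp i,
      α * n ≤ (Nat.card ↥(G.neighborSet v ∩ Vp (i - 1)) : ℝ) ∧
      α * n ≤ (Nat.card ↥(G.neighborSet v ∩ Vp (i + 1)) : ℝ)) := by
  simp only [Nat.card_coe_set_eq] at hδ ⊢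
  -- each count is at least `4 d - n = 2 α n` and at least `0`, hence at least `α n`
  refine ⟨fun i u v _ huv ↦ ?_, fun i v hv ↦ ?_⟩
  · have h := four_mul_sub_le_ncard_inter_neighborSet hne hdisj hedges hδ huv
    rw [Nat.card_fin] at h
    have : (0 : ℝ) ≤ (G.neighborSet u ∩ G.neighborSet v).ncard := Nat.cast_nonneg _
    linarith
  · obtain ⟨hpred, hsucc⟩ := four_mul_sub_le_ncard_neighborSet_inter hne hdisj hedges hδ hv
    rw [Nat.card_fin] at hpred hsucc
    have : (0 : ℝ) ≤ (G.neighborSet v ∩ Vp (i - 1)).ncard := Nat.cast_nonneg _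
    have : (0 : ℝ) ≤ (G.neighborSet v ∩ Vp (i + 1)).ncard := Nat.cast_nonneg _
    constructor <;> linarith

theorem stmt_19 (α : ℝ) (hα : 0 < α) (n : ℕ) (hn : 0 < n) (G : SimpleGraph (Fin n))
    (Vp : Fin 7 → Set (Fin n))
    (hne : ∀ i, (Vp i).Nonempty)
    (hdisj : Pairwise fun i j => Disjoint (Vp i) (Vp j))
    (hcover : (⋃ i, Vp i) = Set.univ)
    (hedges : ∀ u v : Fin n, G.Adj u v →
      ∃ i : Fin 7, (u ∈ Vp i ∧ v ∈ Vp (i + 1)) ∨ (v ∈ Vp i ∧ u ∈ Vp (i + 1)))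
    (hδ : ∀ v, (1 / 4 + α / 2) * n ≤ (Nat.card (G.neighborSet v) : ℝ)) :
    (∀ i : Fin 7, ∀ u v : Fin n, u ≠ v →
      ((u ∈ Vp i ∧ v ∈ Vp i) ∨ (u ∈ Vp i ∧ v ∈ Vp (i + 2))) →
      α * n ≤ (Nat.card ↥(G.neighborSet u ∩ G.neighborSet v) : ℝ)) ∧
    (∀ i : Fin 7, ∀ v ∈ Vp i,
      α * n ≤ (Nat.card ↥(G.neighborSet v ∩ Vp (i - 1)) : ℝ) ∧
      α * n ≤ (Nat.card ↥(G.neighborSet v ∩ Vp (i + 1)) : ℝ)) :=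
  stmt_19_general α n G Vp hne hdisj hedges hδ
end
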